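/- arXiv:1304.6271 — 5 statements merged into one kernel-verified Lean document; each statement's English description precedes it below -/
import Mathlib

section
/- For every ball C ⊊ X with parent ball B: Q_s f_C = f_C for all 0 < s < ρ(B), Q_s f_C = 0 for all s ≥ ρ(B), and consequently P f_C = σ(ρ(B)) · f_C pointwise, i.e. f_C is an eigenfunction of the isotropic Markov operator P with eigenvalue σ(ρ(B)). Moreover the system of these functions is complete: if μ(X) = ∞, the linear span of {f_C : C a ball with C ⊊ X} is dense in L²(X,μ), while if μ(X) < ∞ the linear span of this family together with the constant function 1 is dense in L²(X,μ). -/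
open MeasureTheory Metric Filter
open scoped ENNReal Classical

/-- The averaging operator `Q_r f(x) = μ(B_r(x))⁻¹ ∫_{B_r(x)} f dμ`. -/
noncomputable def avgOp {X : Type*} [MetricSpace X] [MeasurableSpace X]
    (μ : Measure X) (r : ℝ) (f : X → ℝ) (x : X) : ℝ :=
  (μ (closedBall x r)).toReal⁻¹ * ∫ y in closedBall x r, f y ∂μ

/-- The isotropic Markov operator `P^t f(x) = ∫_[0,∞) Q_r f(x) dσ^t(r)`,
where `νt` is the Lebesgue–Stieltjes measure of `σ^t`. -/
noncomputable def isoOp {X : Type*} [MetricSpace X] [MeasurableSpace X]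
    (μ : Measure X) (νt : Measure ℝ) (f : X → ℝ) (x : X) : ℝ :=
  ∫ r in Set.Ici (0:ℝ), avgOp μ r f x ∂νt

/-- The heat kernel `p(t,x,y) = ∫_[d(x,y),∞) μ(B_r(x))⁻¹ dσ^t(r)`. -/
noncomputable def heatK {X : Type*} [MetricSpace X] [MeasurableSpace X]
    (μ : Measure X) (ν : ℝ → Measure ℝ) (t : ℝ) (x y : X) : ℝ≥0∞ :=
  ∫⁻ r in Set.Ici (dist x y), (μ (closedBall x r))⁻¹ ∂(ν t)

/-- The intrinsic ultra-metric `d_*(x,y) = 1/log(1/σ(d(x,y)))` for `x ≠ y`. -/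
noncomputable def dstar {X : Type*} [MetricSpace X] (σ : ℝ → ℝ) (x y : X) : ℝ :=
  if x = y then 0 else 1 / Real.log (1 / σ (dist x y))

/-- The closed ball `B*_s(x)` of the intrinsic ultra-metric. -/
def starBall {X : Type*} [MetricSpace X] (σ : ℝ → ℝ) (x : X) (s : ℝ) : Set X :=
  {y | dstar σ x y ≤ s}

/-- The spectral distribution function `N(x,τ) = 1/μ(B*_{1/τ}(x))`. -/
noncomputable def specN {X : Type*} [MetricSpace X] [MeasurableSpace X]
    (μ : Measure X) (σ : ℝ → ℝ) (x : X) (τ : ℝ) : ℝ≥0∞ :=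
  (μ (starBall σ x (1 / τ)))⁻¹

/-- The Green function `g(x,y) = ∫_0^∞ p(t,x,y) dt`. -/
noncomputable def greenF {X : Type*} [MetricSpace X] [MeasurableSpace X]
    (μ : Measure X) (ν : ℝ → Measure ℝ) (x y : X) : ℝ≥0∞ :=
  ∫⁻ t in Set.Ioi (0:ℝ), heatK μ ν t x y

/-- A (closed) ball of positive radius. -/
def IsBallSet {X : Type*} [MetricSpace X] (B : Set X) : Prop :=
  ∃ (x : X) (r : ℝ), 0 < r ∧ B = closedBall x r

/-- The minimal radius `ρ(B)` of a ball. -/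
noncomputable def minRad {X : Type*} [MetricSpace X] (B : Set X) : ℝ :=
  sInf {r : ℝ | 0 < r ∧ ∃ x : X, B = closedBall x r}

/-- `B` is the parent ball of `C`: the minimal ball properly containing `C`. -/
def IsParent {X : Type*} [MetricSpace X] (B C : Set X) : Prop :=
  IsBallSet B ∧ C ⊂ B ∧
    ∀ A : Set X, IsBallSet A → C ⊆ A → A ⊆ B → A = C ∨ A = B

/-- The eigenfunction `f_C = μ(C)⁻¹ 1_C − μ(B)⁻¹ 1_B` attached to a ball `C`
with parent `B`. -/
noncomputable def eigenFn {X : Type*} [MetricSpace X] [MeasurableSpace X]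
    (μ : Measure X) (C B : Set X) (x : X) : ℝ :=
  (μ C).toReal⁻¹ * C.indicator (fun _ => (1:ℝ)) x -
    (μ B).toReal⁻¹ * B.indicator (fun _ => (1:ℝ)) x

/-!
Inside a ball `B`, a ball of radius `< ρ(B)` either lies in a child `C` of `B` or misses it
(otherwise it would be a ball strictly between `C` and `B`), and it lies in `B` or misses it;
a ball of radius `≥ ρ(B)` meeting `B` contains `B`. Hence `f_C` is constant on balls of radius
`< ρ(B)` and has mean zero on balls of radius `≥ ρ(B)`, so `Q_s f_C` is `f_C` resp. `0`, and
`P f_C = dσ((0, ρ(B))) f_C = σ(ρ(B)) f_C` because `dσ` has no atom at `0`.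

For completeness, follow the parents `C = A₀ ⊂ A₁ ⊂ ⋯`; they exhaust `X` since balls are
compact. Telescoping, `1_C / μ(C) - 1_{Aₙ} / μ(Aₙ)` lies in the span of the `f_C`, and
`1_{Aₙ} / μ(Aₙ)` tends in `L²` to `0` if `μ(X) = ∞` and to `1 / μ(X)` otherwise. So indicators of
balls lie in the `L²`-closure of the span, hence so do step functions on the partition of a
ball into balls of a small radius, which approximate continuous compactly supported functions
uniformly; and those are dense in `L²`.
-/

open scoped Topology

theorem isBallSet_closedBall {X : Type*} [MetricSpace X] (x : X) {r : ℝ} (hr : 0 < r) :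
    IsBallSet (closedBall x r) :=
  ⟨x, r, hr, rfl⟩

theorem minRad_le {X : Type*} [MetricSpace X] {B : Set X} {x : X} {r : ℝ} (hr : 0 < r)
    (hB : B = closedBall x r) : minRad B ≤ r :=
  csInf_le ⟨0, fun _ hs => hs.1.le⟩ ⟨hr, x, hB⟩

theorem minRad_nonneg {X : Type*} [MetricSpace X] (B : Set X) : 0 ≤ minRad B :=
  Real.sInf_nonneg fun _ hr => hr.1.le

namespace IsBallSet

variable {X : Type*} [MetricSpace X] {A B C : Set X} {x y : X}

theorem nonempty (hB : IsBallSet B) : B.Nonempty := by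
  obtain ⟨x, r, hr, rfl⟩ := hB
  exact ⟨x, mem_closedBall_self hr.le⟩

theorem measurableSet [MeasurableSpace X] [OpensMeasurableSpace X] (hB : IsBallSet B) :
    MeasurableSet B := by
  obtain ⟨x, r, -, rfl⟩ := hB
  exact measurableSet_closedBall

variable [IsUltrametricDist X]

theorem isOpen (hB : IsBallSet B) : IsOpen B := by
  obtain ⟨x, r, hr, rfl⟩ := hB
  exact IsUltrametricDist.isOpen_closedBall x hr.ne'

theorem exists_eq_closedBall_of_mem (hB : IsBallSet B) (hx : x ∈ B) :
    ∃ r, 0 < r ∧ B = closedBall x r := by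
  obtain ⟨c, r, hr, rfl⟩ := hB
  exact ⟨r, hr, IsUltrametricDist.closedBall_eq_of_mem hx⟩

theorem eq_closedBall_minRad (hB : IsBallSet B) (hx : x ∈ B) : B = closedBall x (minRad B) := by
  obtain ⟨r₀, hr₀, hB₀⟩ := hB.exists_eq_closedBall_of_mem hx
  have hradii : ({r | 0 < r ∧ ∃ c, B = closedBall c r} : Set ℝ).Nonempty := ⟨r₀, hr₀, x, hB₀⟩
  refine Set.Subset.antisymm (fun y hy => le_csInf hradii ?_) ?_
  · rintro r ⟨-, c, hc⟩
    rw [hc] at hx hy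
    rwa [IsUltrametricDist.closedBall_eq_of_mem hx] at hy
  · exact (closedBall_subset_closedBall (minRad_le hr₀ hB₀)).trans hB₀.symm.subset

theorem mem_iff_of_dist_le_minRad (hB : IsBallSet B) (h : dist y x ≤ minRad B) :
    y ∈ B ↔ x ∈ B := by
  refine ⟨fun hy => ?_, fun hx => ?_⟩
  · rw [hB.eq_closedBall_minRad hy, mem_closedBall, dist_comm]
    exact h
  · rw [hB.eq_closedBall_minRad hx]
    exact h

theorem subset_or_disjoint_closedBall (hB : IsBallSet B) {s : ℝ} (hs : minRad B ≤ s) :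
    B ⊆ closedBall x s ∨ Disjoint B (closedBall x s) := by
  refine (Set.disjoint_or_nonempty_inter B (closedBall x s)).symm.imp (fun ⟨y, hyB, hy⟩ => ?_) id
  rw [hB.eq_closedBall_minRad hyB, IsUltrametricDist.closedBall_eq_of_mem hy]
  exact closedBall_subset_closedBall hs

theorem closedBall_subset_of_mem (hA : IsBallSet A) {r : ℝ} (hr : 0 ≤ r)
    (hxA : closedBall x r ⊆ A) (hy : y ∈ A) : closedBall y r ⊆ A := by
  obtain ⟨t, -, hAt⟩ := hA.exists_eq_closedBall_of_mem (hxA (mem_closedBall_self hr))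
  rcases le_total r t with hrt | htr
  · rw [hAt] at hy ⊢
    rw [IsUltrametricDist.closedBall_eq_of_mem hy]
    exact closedBall_subset_closedBall hrt
  · have hA_eq : A = closedBall x r :=
      (hAt ▸ closedBall_subset_closedBall htr).antisymm hxA
    rw [hA_eq] at hy ⊢
    rw [IsUltrametricDist.closedBall_eq_of_mem hy]

end IsBallSet

namespace IsParent

variable {X : Type*} [MetricSpace X] {B C : Set X} {x y : X}

theorem isBallSet (hP : IsParent B C) : IsBallSet B := hP.1

theorem subset (hP : IsParent B C) : C ⊆ B := hP.2.1.subset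

variable [IsUltrametricDist X]

theorem mem_of_dist_lt_minRad (hP : IsParent B C) (hC : IsBallSet C) (hx : x ∈ C)
    (h : dist y x < minRad B) : y ∈ C := by
  obtain ⟨r, hr, hCr⟩ := hC.exists_eq_closedBall_of_mem hx
  by_cases hyr : dist y x ≤ r
  · rw [hCr]
    exact hyr
  replace hyr := not_le.1 hyr
  have hCA : C ⊆ closedBall x (dist y x) := hCr ▸ closedBall_subset_closedBall hyr.le
  have hAB : closedBall x (dist y x) ⊆ B :=
    hP.isBallSet.eq_closedBall_minRad (hP.subset hx) ▸ closedBall_subset_closedBall h.le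
  rcases hP.2.2 _ (isBallSet_closedBall x (hr.trans hyr)) hCA hAB with hAC | hAB
  · exact hAC ▸ mem_closedBall.2 le_rfl
  · exact absurd (minRad_le (hr.trans hyr) hAB.symm) h.not_ge

theorem mem_iff_of_dist_lt_minRad (hP : IsParent B C) (hC : IsBallSet C)
    (h : dist y x < minRad B) : y ∈ C ↔ x ∈ C :=
  ⟨fun hy => hP.mem_of_dist_lt_minRad hC hy (dist_comm x y ▸ h),
    fun hx => hP.mem_of_dist_lt_minRad hC hx h⟩

end IsParent

section ParentChain

variable {X : Type*} [MetricSpace X] {C : Set X}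

/-- The parent of `closedBall x r` is the ball around `x` through a point of its complement
nearest to `x`; such a point exists because the complement of a ball is closed and closed balls
are compact. -/
theorem IsBallSet.exists_isParent [IsUltrametricDist X] [ProperSpace X] (hC : IsBallSet C)
    (hCne : C ≠ Set.univ) : ∃ B, IsParent B C := by
  obtain ⟨x, r, hr, rfl⟩ := hC
  obtain ⟨z, hz⟩ := (Set.ne_univ_iff_exists_notMem _).1 hCne
  obtain ⟨y, ⟨hyz, hyC⟩, hmin⟩ :=
    ((isCompact_closedBall x (dist z x)).diff (IsUltrametricDist.isOpen_closedBall x hr.ne')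
      ).exists_isMinOn ⟨z, mem_closedBall.2 le_rfl, hz⟩
      (continuous_id.dist continuous_const).continuousOn
  have hry : r < dist y x := not_le.1 hyC
  refine ⟨closedBall x (dist y x), isBallSet_closedBall x (hr.trans hry),
    ⟨closedBall_subset_closedBall hry.le, fun h => hyC (h (mem_closedBall.2 le_rfl))⟩,
    fun A hA hCA hAB => ?_⟩
  by_cases hAC : A ⊆ closedBall x r
  · exact Or.inl (hAC.antisymm hCA)
  obtain ⟨w, hwA, hwC⟩ := Set.not_subset.1 hAC
  obtain ⟨t, -, rfl⟩ := hA.exists_eq_closedBall_of_mem (hCA (mem_closedBall_self hr.le))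
  have hwy : dist y x ≤ dist w x :=
    hmin ⟨(mem_closedBall.1 (hAB hwA)).trans (mem_closedBall.1 hyz), hwC⟩
  exact Or.inr (hAB.antisymm (closedBall_subset_closedBall (hwy.trans hwA)))

/-- Iterated parents of `C`; the chain stays put once there is no parent, i.e. at `univ`. -/
noncomputable def parentChain (C : Set X) : ℕ → Set X
  | 0 => C
  | n + 1 => if h : ∃ B, IsParent B (parentChain C n) then h.choose else parentChain C n

theorem monotone_parentChain : Monotone (parentChain C) := by
  refine monotone_nat_of_le_succ fun n => ?_
  rw [parentChain]
  split_ifs with h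
  exacts [h.choose_spec.subset, le_rfl]

theorem isBallSet_parentChain (hC : IsBallSet C) (n : ℕ) : IsBallSet (parentChain C n) := by
  induction n with
  | zero => exact hC
  | succ n ih =>
    rw [parentChain]
    split_ifs with h
    exacts [h.choose_spec.isBallSet, ih]

theorem parentChain_succ_of_eq_univ {n : ℕ} (hn : parentChain C n = Set.univ) :
    parentChain C (n + 1) = parentChain C n := by
  rw [parentChain, dif_neg]
  rintro ⟨B, hB⟩
  exact (Set.subset_univ B).not_ssubset (hn ▸ hB.2.1)

variable [IsUltrametricDist X] [ProperSpace X]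

theorem isParent_parentChain (hC : IsBallSet C) {n : ℕ} (hn : parentChain C n ≠ Set.univ) :
    IsParent (parentChain C (n + 1)) (parentChain C n) := by
  have h := (isBallSet_parentChain hC n).exists_isParent hn
  rw [parentChain, dif_pos h]
  exact h.choose_spec

/-- Otherwise the chain stays inside the compact ball `closedBall x (dist w x)`, and points of
`parentChain C (n + 1) \ parentChain C n` form an `r`-separated sequence there, for `r` a radius
of `C`. -/
theorem iUnion_parentChain (hC : IsBallSet C) : ⋃ n, parentChain C n = Set.univ := by
  refine Set.eq_univ_of_forall fun w => ?_
  by_contra hw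
  simp only [Set.mem_iUnion, not_exists] at hw
  obtain ⟨x, r, hr, hCx⟩ := id hC
  have hxA : ∀ n, closedBall x r ⊆ parentChain C n :=
    fun n => hCx ▸ monotone_parentChain (Nat.zero_le n)
  have hAD : ∀ n, parentChain C n ⊆ closedBall x (dist w x) := by
    intro n
    obtain ⟨t, -, ht⟩ :=
      (isBallSet_parentChain hC n).exists_eq_closedBall_of_mem (hxA n (mem_closedBall_self hr.le))
    have hwt : t < dist w x := not_le.1 fun h => hw n (ht ▸ mem_closedBall.2 h)
    exact ht ▸ closedBall_subset_closedBall hwt.le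
  choose y hy hy' using fun n =>
    Set.exists_of_ssubset (isParent_parentChain hC fun h => hw n (h ▸ Set.mem_univ w)).2.1
  have hsep : ∀ m n, m < n → r < dist (y m) (y n) := fun m n hmn => not_le.1 fun hle =>
    hy' n ((isBallSet_parentChain hC n).closedBall_subset_of_mem hr.le (hxA n)
      (monotone_parentChain hmn (hy m)) (mem_closedBall'.2 hle))
  obtain ⟨z, -, φ, hφ, hlim⟩ :=
    (isCompact_closedBall x (dist w x)).tendsto_subseq fun n => hAD (n + 1) (hy n)
  obtain ⟨N, hN⟩ := Metric.cauchySeq_iff'.1 hlim.cauchySeq r hr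
  have hclose : dist (y (φ (N + 1))) (y (φ N)) < r := hN (N + 1) N.le_succ
  exact hclose.not_gt (dist_comm (y (φ N)) _ ▸ hsep _ _ (hφ N.lt_succ_self))

end ParentChain

theorem Finset.sum_smul_indicator_one_apply_of_mem {X ι : Type*} {t : Finset ι} {s : ι → Set X}
    (hdisj : (t : Set ι).PairwiseDisjoint s) (a : ι → ℝ) {i : ι} (hi : i ∈ t) {x : X}
    (hx : x ∈ s i) : (∑ j ∈ t, a j • (s j).indicator (fun _ => (1 : ℝ))) x = a i := by
  simp only [Finset.sum_apply, Pi.smul_apply, smul_eq_mul]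
  rw [Finset.sum_eq_single_of_mem i hi fun j hj hji => ?_]
  · simp [Set.indicator_of_mem hx]
  · rw [Set.indicator_of_notMem (Set.disjoint_right.1 (hdisj hj hi hji) hx), mul_zero]

section StepFunctions

variable {X : Type*} [MetricSpace X] [IsUltrametricDist X]

theorem IsCompact.exists_finset_pairwiseDisjoint_closedBall_cover {K : Set X} (hK : IsCompact K)
    {r : ℝ} (hr : 0 < r) :
    ∃ t : Finset X, ↑t ⊆ K ∧ K ⊆ ⋃ c ∈ t, closedBall c r ∧
      (t : Set X).PairwiseDisjoint fun c => closedBall c r := by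
  classical
  obtain ⟨t₀, ht₀K, hcover⟩ :=
    hK.elim_nhds_subcover (closedBall · r) fun x _ => closedBall_mem_nhds x hr
  obtain ⟨t, htt₀, hinj, himage⟩ := Finset.exists_subset_injOn_image_eq_of_surjOn (t₀ : Set X)
    (t₀.image (closedBall · r)) (by rw [Finset.coe_image]; exact Set.surjOn_image _ _)
  refine ⟨t, fun c hc => ht₀K c (htt₀ hc), fun x hx => ?_, fun c hc c' hc' hne => ?_⟩
  · obtain ⟨c, hc, hxc⟩ := Set.mem_iUnion₂.1 (hcover hx)
    obtain ⟨c', hc', hcc'⟩ :=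
      Finset.mem_image.1 (himage ▸ Finset.mem_image_of_mem (closedBall · r) hc)
    exact Set.mem_iUnion₂.2 ⟨c', hc', hcc' ▸ hxc⟩
  · exact (IsUltrametricDist.closedBall_eq_or_disjoint c c' r).resolve_left
      fun h => hne (hinj hc hc' h)

variable (X) in
def ballIndicators : Set (X → ℝ) := {f | ∃ B, IsBallSet B ∧ f = B.indicator fun _ => 1}

/-- The balls of radius `r ≤ R` partition `closedBall x₀ R`; take the step function which is
constant on each of them, with `r` below the modulus of uniform continuity of `g` for `η`. -/
theorem UniformContinuous.exists_mem_span_ballIndicators_norm_sub_le {g : X → ℝ}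
    (hg : UniformContinuous g) {x₀ : X} {R : ℝ} (hR : 0 < R) (hK : IsCompact (closedBall x₀ R))
    (hsupp : ∀ x ∉ closedBall x₀ R, g x = 0) {η : ℝ} (hη : 0 < η) :
    ∃ φ ∈ Submodule.span ℝ (ballIndicators X),
      ∀ x, ‖(g - φ) x‖ ≤ (closedBall x₀ R).indicator (fun _ => η) x := by
  obtain ⟨δ, hδ, hgδ⟩ := Metric.uniformContinuous_iff.1 hg η hη
  have hr : 0 < min (δ / 2) R := lt_min (half_pos hδ) hR
  set r := min (δ / 2) R
  obtain ⟨t, htD, hcover, hdisj⟩ := hK.exists_finset_pairwiseDisjoint_closedBall_cover hr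
  refine ⟨∑ c ∈ t, g c • (closedBall c r).indicator fun _ => (1 : ℝ), Submodule.sum_mem _
    fun c _ => Submodule.smul_mem _ _ (Submodule.subset_span ⟨_, isBallSet_closedBall c hr, rfl⟩),
    fun x => ?_⟩
  by_cases hx : x ∈ closedBall x₀ R
  · obtain ⟨c, hct, hxc⟩ := Set.mem_iUnion₂.1 (hcover hx)
    rw [Pi.sub_apply, Finset.sum_smul_indicator_one_apply_of_mem hdisj g hct hxc,
      Set.indicator_of_mem hx, ← dist_eq_norm]
    exact (hgδ ((mem_closedBall.1 hxc).trans_lt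
      ((min_le_left _ _).trans_lt (half_lt_self hδ)))).le
  · have hballs : ∀ c ∈ t, x ∉ closedBall c r := fun c hc hxc => hx <| by
      rw [IsUltrametricDist.closedBall_eq_of_mem (htD hc)]
      exact closedBall_subset_closedBall (min_le_right _ _) hxc
    rw [Pi.sub_apply, hsupp x hx, Set.indicator_of_notMem hx, Finset.sum_apply,
      Finset.sum_eq_zero fun c hc => by simp [Set.indicator_of_notMem (hballs c hc)], sub_zero,
      norm_zero]

end StepFunctions

section NormalizedIndicator

variable {X : Type*} [MeasurableSpace X] {μ : Measure X}

variable (μ) in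
noncomputable def normInd (E : Set X) (x : X) : ℝ :=
  (μ E).toReal⁻¹ * E.indicator (fun _ => (1 : ℝ)) x

theorem normInd_eq_indicator (E : Set X) :
    normInd μ E = E.indicator (fun _ => (μ E).toReal⁻¹) := by
  ext x
  by_cases hx : x ∈ E <;> simp [normInd, hx]

/-- No finiteness is needed: if `μ E = ∞` then `normInd μ E = 0`. -/
theorem memLp_normInd {E : Set X} (hE : MeasurableSet E) (p : ℝ≥0∞) :
    MemLp (normInd μ E) p μ := by
  rw [normInd_eq_indicator]
  refine memLp_indicator_const p hE _ ?_
  by_cases h : μ E = ⊤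
  · simp [h]
  · exact Or.inr h

theorem integral_normInd {E : Set X} (hE : MeasurableSet E) (h0 : μ E ≠ 0) (hfin : μ E ≠ ⊤) :
    ∫ x, normInd μ E x ∂μ = 1 := by
  rw [normInd_eq_indicator, integral_indicator_const _ hE, measureReal_def, smul_eq_mul,
    mul_inv_cancel₀ (ENNReal.toReal_ne_zero.2 ⟨h0, hfin⟩)]

end NormalizedIndicator

section Integrals

variable {X : Type*} [MetricSpace X] [MeasurableSpace X] {μ : Measure X}

theorem eigenFn_eq_sub (C B : Set X) : eigenFn μ C B = normInd μ C - normInd μ B := rfl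

theorem integral_eigenFn {C B : Set X} (hC : MeasurableSet C) (hB : MeasurableSet B)
    (hC0 : μ C ≠ 0) (hCfin : μ C ≠ ⊤) (hB0 : μ B ≠ 0) (hBfin : μ B ≠ ⊤) :
    ∫ x, eigenFn μ C B x ∂μ = 0 := by
  simp only [eigenFn_eq_sub, Pi.sub_apply]
  rw [integral_sub (memLp_one_iff_integrable.1 (memLp_normInd hC 1))
    (memLp_one_iff_integrable.1 (memLp_normInd hB 1)), integral_normInd hC hC0 hCfin,
    integral_normInd hB hB0 hBfin, sub_self]

theorem eigenFn_eq_zero_of_notMem {C B : Set X} (hCB : C ⊆ B) {x : X} (hx : x ∉ B) :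
    eigenFn μ C B x = 0 := by
  simp [eigenFn, hx, show x ∉ C from fun h => hx (hCB h)]

theorem avgOp_of_forall_eq [OpensMeasurableSpace X] {f : X → ℝ} {x : X} {r : ℝ}
    (h0 : μ (closedBall x r) ≠ 0) (hfin : μ (closedBall x r) ≠ ⊤)
    (hf : ∀ y ∈ closedBall x r, f y = f x) : avgOp μ r f x = f x := by
  rw [avgOp, setIntegral_congr_fun measurableSet_closedBall hf, setIntegral_const, smul_eq_mul,
    measureReal_def, inv_mul_cancel_left₀ (ENNReal.toReal_ne_zero.2 ⟨h0, hfin⟩)]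

end Integrals

section Eigenfunction

variable {X : Type*} [MetricSpace X] [MeasurableSpace X] {μ : Measure X} {B C : Set X}

theorem IsBallSet.measure_ne_zero [IsUltrametricDist X] [μ.IsOpenPosMeasure] (hB : IsBallSet B) :
    μ B ≠ 0 :=
  hB.isOpen.measure_ne_zero μ hB.nonempty

theorem IsBallSet.measure_ne_top [ProperSpace X] [IsFiniteMeasureOnCompacts μ]
    (hB : IsBallSet B) : μ B ≠ ⊤ := by
  obtain ⟨x, r, -, rfl⟩ := hB
  exact measure_closedBall_lt_top.ne

variable [IsUltrametricDist X] [ProperSpace X] [OpensMeasurableSpace X] [μ.IsOpenPosMeasure]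
  [IsFiniteMeasureOnCompacts μ]

theorem avgOp_eigenFn_of_lt_minRad (hC : IsBallSet C) (hP : IsParent B C) {s : ℝ} (hs : 0 < s)
    (hsB : s < minRad B) (x : X) : avgOp μ s (eigenFn μ C B) x = eigenFn μ C B x := by
  refine avgOp_of_forall_eq (measure_closedBall_pos μ x hs).ne' measure_closedBall_lt_top.ne
    fun y hy => ?_
  have hyx : dist y x ≤ s := hy
  simp only [eigenFn, Set.indicator_apply, hP.mem_iff_of_dist_lt_minRad hC (hyx.trans_lt hsB),
    hP.isBallSet.mem_iff_of_dist_le_minRad (hyx.trans hsB.le)]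

theorem avgOp_eigenFn_of_minRad_le (hC : IsBallSet C) (hP : IsParent B C) {s : ℝ}
    (hsB : minRad B ≤ s) (x : X) : avgOp μ s (eigenFn μ C B) x = 0 := by
  have hvanish : ∀ y ∉ B, eigenFn μ C B y = 0 := fun y => eigenFn_eq_zero_of_notMem hP.subset
  have hint : ∫ y in closedBall x s, eigenFn μ C B y ∂μ = 0 := by
    rcases hP.isBallSet.subset_or_disjoint_closedBall hsB with hsub | hdisj
    · rw [setIntegral_eq_integral_of_forall_compl_eq_zero fun y hy => hvanish y (hy ∘ @hsub y)]
      exact integral_eigenFn hC.measurableSet hP.isBallSet.measurableSet hC.measure_ne_zero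
        hC.measure_ne_top hP.isBallSet.measure_ne_zero hP.isBallSet.measure_ne_top
    · exact setIntegral_eq_zero_of_forall_eq_zero fun y hy =>
        hvanish y (Set.disjoint_right.1 hdisj hy)
  rw [avgOp, hint, mul_zero]

end Eigenfunction

section MarkovOperator

variable {X : Type*} [MetricSpace X] [MeasurableSpace X] {μ : Measure X} {ν : Measure ℝ}

theorem isoOp_eq_of_avgOp {f : X → ℝ} {x : X} {ρ : ℝ} (hν0 : ν {0} = 0)
    (hlt : ∀ r, 0 < r → r < ρ → avgOp μ r f x = f x) (hge : ∀ r, ρ ≤ r → avgOp μ r f x = 0) :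
    isoOp μ ν f x = ν.real (Set.Ioo 0 ρ) * f x := by
  have hae : ∀ᵐ r ∂ν.restrict (Set.Ici 0),
      avgOp μ r f x = (Set.Ioo 0 ρ).indicator (fun _ => f x) r := by
    filter_upwards [ae_restrict_mem measurableSet_Ici,
      ae_restrict_of_ae (measure_eq_zero_iff_ae_notMem.1 hν0)] with r hr0 hr
    rcases lt_or_ge r ρ with hrρ | hρr
    · have hr : 0 < r := lt_of_le_of_ne hr0 (Ne.symm hr)
      rw [hlt r hr hrρ, Set.indicator_of_mem (Set.mem_Ioo.2 ⟨hr, hrρ⟩)]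
    · rw [hge r hρr, Set.indicator_of_notMem fun h => h.2.not_ge hρr]
  rw [isoOp, integral_congr_ae hae, integral_indicator_const _ measurableSet_Ioo, smul_eq_mul,
    measureReal_restrict_apply measurableSet_Ioo, Set.inter_eq_left.2 fun r hr => hr.1.le]

variable {σ : ℝ → ℝ}

theorem apply_zero_eq_zero_of_tendsto (hmono : MonotoneOn σ (Set.Ici 0)) (h0 : 0 ≤ σ 0)
    (hlim : Tendsto σ (𝓝[>] 0) (𝓝 0)) : σ 0 = 0 :=
  le_antisymm (ge_of_tendsto hlim (eventually_nhdsWithin_of_forall fun r (hr : 0 < r) =>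
    hmono (Set.mem_Ici.2 le_rfl) hr.le hr.le)) h0

variable (hν : ∀ a b : ℝ, 0 ≤ a → a ≤ b → ν (Set.Ico a b) = ENNReal.ofReal (σ b - σ a))
  (hσ0 : σ 0 = 0)
include hν hσ0

theorem measure_singleton_zero_eq_zero (hlim : Tendsto σ (𝓝[>] 0) (𝓝 0)) : ν {0} = 0 := by
  have hlim' : Tendsto (fun r => ENNReal.ofReal (σ r)) (𝓝[>] 0) (𝓝 0) := by
    simpa [Function.comp_def] using (ENNReal.continuous_ofReal.tendsto 0).comp hlim
  refine le_antisymm (ge_of_tendsto hlim' ?_) bot_le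
  filter_upwards [self_mem_nhdsWithin] with r (hr : 0 < r)
  calc ν {0} ≤ ν (Set.Ico 0 r) := measure_mono (Set.singleton_subset_iff.2 ⟨le_rfl, hr⟩)
    _ = ENNReal.ofReal (σ r) := by rw [hν 0 r le_rfl hr.le, hσ0, sub_zero]

theorem measure_Ioo_zero_eq_ofReal (hν0 : ν {0} = 0) {ρ : ℝ} (hρ : 0 ≤ ρ) :
    ν (Set.Ioo 0 ρ) = ENNReal.ofReal (σ ρ) := by
  rw [← Set.Ico_sdiff_left, measure_sdiff_null hν0, hν 0 ρ le_rfl hρ, hσ0, sub_zero]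

end MarkovOperator

section BallIndicatorApproximation

variable {X : Type*} [MeasurableSpace X] {μ : Measure X}

theorem indicator_one_eq_smul_normInd {E : Set X} (h0 : μ E ≠ 0) (hfin : μ E ≠ ⊤) :
    E.indicator (fun _ => (1 : ℝ)) = (μ E).toReal • normInd μ E := by
  ext x
  simp [normInd, ← mul_assoc, mul_inv_cancel₀ (ENNReal.toReal_ne_zero.2 ⟨h0, hfin⟩)]

theorem eLpNorm_normInd {E : Set X} (hE : MeasurableSet E) (h0 : μ E ≠ 0) (hfin : μ E ≠ ⊤) :
    eLpNorm (normInd μ E) 2 μ = μ E ^ (-(1 / 2) : ℝ) := by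
  rw [normInd_eq_indicator, eLpNorm_indicator_const hE two_ne_zero ENNReal.ofNat_ne_top,
    Real.enorm_eq_ofReal (inv_nonneg.2 ENNReal.toReal_nonneg),
    ENNReal.ofReal_inv_of_pos (ENNReal.toReal_pos h0 hfin), ENNReal.ofReal_toReal hfin,
    ← ENNReal.rpow_neg_one, ← ENNReal.rpow_add _ _ h0 hfin]
  norm_num

theorem exists_eLpNorm_indicator_sub_lt_of_tendsto {S : Submodule ℝ (X → ℝ)} {E : Set X}
    (h0 : μ E ≠ 0) (hfin : μ E ≠ ⊤) {F : ℕ → X → ℝ} (hF : ∀ n, normInd μ E - F n ∈ S)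
    (hlim : Tendsto (fun n => eLpNorm (F n) 2 μ) atTop (𝓝 0)) {ε : ℝ≥0∞} (hε : 0 < ε) :
    ∃ g ∈ S, eLpNorm (E.indicator (fun _ => (1 : ℝ)) - g) 2 μ < ε := by
  set K := (μ E).toReal
  have hlim' : Tendsto (fun n => ‖K‖ₑ * eLpNorm (F n) 2 μ) atTop (𝓝 0) := by
    simpa using ENNReal.Tendsto.const_mul hlim (Or.inr enorm_ne_top)
  obtain ⟨n, hn⟩ := (hlim'.eventually_lt_const hε).exists
  refine ⟨K • (normInd μ E - F n), S.smul_mem K (hF n), ?_⟩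
  rwa [indicator_one_eq_smul_normInd h0 hfin, ← smul_sub, sub_sub_cancel, eLpNorm_const_smul]

theorem eLpNorm_normInd_sub_normInd_univ_le [IsFiniteMeasure μ] {E : Set X}
    (hE : MeasurableSet E) :
    eLpNorm (normInd μ E - normInd μ Set.univ) 2 μ ≤
      ‖(μ E).toReal⁻¹ - (μ Set.univ).toReal⁻¹‖ₑ * μ Set.univ ^ (1 / 2 : ℝ) +
        ‖(μ Set.univ).toReal⁻¹‖ₑ * μ Eᶜ ^ (1 / 2 : ℝ) := by
  have hsplit : normInd μ E - normInd μ Set.univ =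
      E.indicator (fun _ => (μ E).toReal⁻¹ - (μ Set.univ).toReal⁻¹) -
        Eᶜ.indicator (fun _ => (μ Set.univ).toReal⁻¹) := by
    ext x
    by_cases hx : x ∈ E <;> simp [normInd, hx]
  rw [hsplit]
  refine (eLpNorm_sub_le (aestronglyMeasurable_const.indicator hE)
    (aestronglyMeasurable_const.indicator hE.compl) one_le_two).trans (add_le_add ?_ ?_)
  · refine (eLpNorm_indicator_const_le _ _).trans ?_
    rw [ENNReal.toReal_ofNat]
    gcongr
    exact Set.subset_univ _
  · exact (eLpNorm_indicator_const_le _ _).trans_eq (by rw [ENNReal.toReal_ofNat])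

theorem tendsto_eLpNorm_normInd_sub_normInd_univ [IsFiniteMeasure μ] {A : ℕ → Set X}
    (hA : ∀ n, MeasurableSet (A n)) (hmono : Monotone A) (hU : ⋃ n, A n = Set.univ)
    (h0 : μ Set.univ ≠ 0) :
    Tendsto (fun n => eLpNorm (normInd μ (A n) - normInd μ Set.univ) 2 μ) atTop (𝓝 0) := by
  set m := (μ Set.univ).toReal
  have hμA : Tendsto (fun n => μ (A n)) atTop (𝓝 (μ Set.univ)) := by
    simpa [hU, Function.comp_def] using tendsto_measure_iUnion_atTop hmono
  have h1 : Tendsto (fun n => ‖(μ (A n)).toReal⁻¹ - m⁻¹‖ₑ) atTop (𝓝 0) := by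
    have hinv := ((ENNReal.tendsto_toReal (measure_ne_top μ _)).comp hμA).inv₀
      (ENNReal.toReal_ne_zero.2 ⟨h0, measure_ne_top μ _⟩)
    simpa [m, Function.comp_def] using (continuous_enorm.tendsto _).comp (hinv.sub_const m⁻¹)
  have h2 : Tendsto (fun n => μ (A n)ᶜ ^ (1 / 2 : ℝ)) atTop (𝓝 0) := by
    have hcompl : Tendsto (fun n => μ (A n)ᶜ) atTop (𝓝 0) := by
      simp_rw [measure_compl (hA _) (measure_ne_top μ _)]
      simpa using ENNReal.Tendsto.sub tendsto_const_nhds hμA (Or.inl (measure_ne_top μ Set.univ))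
    have hrpow := ((ENNReal.continuous_rpow_const (y := 1 / 2)).tendsto 0).comp hcompl
    simpa [Function.comp_def, ENNReal.zero_rpow_of_pos] using hrpow
  have hsum := (ENNReal.Tendsto.mul_const (b := μ Set.univ ^ (1 / 2 : ℝ)) h1
    (Or.inr (by finiteness))).add (ENNReal.Tendsto.const_mul h2 (Or.inr (enorm_ne_top (x := m⁻¹))))
  simp only [zero_mul, mul_zero, add_zero] at hsum
  exact tendsto_of_tendsto_of_tendsto_of_le_of_le tendsto_const_nhds hsum (fun _ => zero_le)
    fun n => eLpNorm_normInd_sub_normInd_univ_le (hA n)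

end BallIndicatorApproximation

section EigenfunctionSpan

variable {X : Type*} [MetricSpace X] [MeasurableSpace X] {μ : Measure X} {C : Set X}

variable (μ) in
def eigenFnSet : Set (X → ℝ) :=
  {f | ∃ C B : Set X, IsBallSet C ∧ C ≠ Set.univ ∧ IsParent B C ∧ f = eigenFn μ C B}

theorem normInd_sub_normInd_parentChain_mem_span [IsUltrametricDist X] [ProperSpace X]
    (hC : IsBallSet C) (n : ℕ) :
    normInd μ C - normInd μ (parentChain C n) ∈ Submodule.span ℝ (eigenFnSet μ) := by
  induction n with
  | zero => simp [parentChain]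
  | succ n ih =>
    by_cases hn : parentChain C n = Set.univ
    · rwa [parentChain_succ_of_eq_univ hn]
    rw [← sub_add_sub_cancel _ (normInd μ (parentChain C n))]
    exact Submodule.add_mem _ ih (Submodule.subset_span
      ⟨_, _, isBallSet_parentChain hC n, hn, isParent_parentChain hC hn, rfl⟩)

variable [IsUltrametricDist X] [ProperSpace X] [OpensMeasurableSpace X] [μ.IsOpenPosMeasure]
  [IsFiniteMeasureOnCompacts μ]

theorem exists_mem_span_eigenFnSet_eLpNorm_indicator_sub_lt (hμ : μ Set.univ = ⊤)
    (hC : IsBallSet C) {ε : ℝ≥0∞} (hε : 0 < ε) :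
    ∃ g ∈ Submodule.span ℝ (eigenFnSet μ),
      eLpNorm (C.indicator (fun _ => (1 : ℝ)) - g) 2 μ < ε := by
  have hball := isBallSet_parentChain hC
  refine exists_eLpNorm_indicator_sub_lt_of_tendsto hC.measure_ne_zero hC.measure_ne_top
    (normInd_sub_normInd_parentChain_mem_span hC) ?_ hε
  have hlim : Tendsto (fun n => μ (parentChain C n)) atTop (𝓝 ⊤) := by
    simpa [iUnion_parentChain hC, hμ, Function.comp_def] using
      tendsto_measure_iUnion_atTop (μ := μ) (monotone_parentChain (C := C))
  have hrpow := ((ENNReal.continuous_rpow_const (y := -(1 / 2))).tendsto ⊤).comp hlim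
  rw [ENNReal.top_rpow_of_neg (by norm_num)] at hrpow
  refine hrpow.congr fun n => ?_
  exact (eLpNorm_normInd (hball n).measurableSet (hball n).measure_ne_zero
    (hball n).measure_ne_top).symm

theorem exists_mem_span_insert_eigenFnSet_eLpNorm_indicator_sub_lt [IsFiniteMeasure μ]
    (hC : IsBallSet C) {ε : ℝ≥0∞} (hε : 0 < ε) :
    ∃ g ∈ Submodule.span ℝ (insert (fun _ => (1 : ℝ)) (eigenFnSet μ)),
      eLpNorm (C.indicator (fun _ => (1 : ℝ)) - g) 2 μ < ε := by
  have hball := isBallSet_parentChain hC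
  have hconst : normInd μ Set.univ = (μ Set.univ).toReal⁻¹ • fun _ => (1 : ℝ) := by
    ext x
    simp [normInd]
  refine exists_eLpNorm_indicator_sub_lt_of_tendsto hC.measure_ne_zero hC.measure_ne_top
    (fun n => ?_) (tendsto_eLpNorm_normInd_sub_normInd_univ (fun n => (hball n).measurableSet)
      monotone_parentChain (iUnion_parentChain hC)
      (ne_bot_of_le_ne_bot hC.measure_ne_zero (measure_mono (Set.subset_univ C)))) hε
  rw [← sub_add, hconst]
  exact Submodule.add_mem _
    (Submodule.span_mono (Set.subset_insert _ _) (normInd_sub_normInd_parentChain_mem_span hC n))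
    (Submodule.smul_mem _ _ (Submodule.subset_span (Set.mem_insert _ _)))

end EigenfunctionSpan

section L2Density

variable {X : Type*} [MeasurableSpace X] {μ : Measure X}

variable (μ) in
def Submodule.toL2 (S : Submodule ℝ (X → ℝ)) : Submodule ℝ (Lp ℝ 2 μ) where
  carrier := {F | ∃ f ∈ S, (F : X → ℝ) =ᵐ[μ] f}
  add_mem' := by
    rintro F G ⟨f, hf, hFf⟩ ⟨g, hg, hGg⟩
    exact ⟨f + g, S.add_mem hf hg, (Lp.coeFn_add F G).trans (hFf.add hGg)⟩
  zero_mem' := ⟨0, S.zero_mem, Lp.coeFn_zero ℝ 2 μ⟩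
  smul_mem' := by
    rintro c F ⟨f, hf, hFf⟩
    exact ⟨c • f, S.smul_mem c hf, (Lp.coeFn_smul c F).trans (hFf.const_smul c)⟩

variable (μ) in
def Submodule.ofL2 (V : Submodule ℝ (Lp ℝ 2 μ)) : Submodule ℝ (X → ℝ) where
  carrier := {f | ∃ F ∈ V, (F : X → ℝ) =ᵐ[μ] f}
  add_mem' := by
    rintro f g ⟨F, hF, hFf⟩ ⟨G, hG, hGg⟩
    exact ⟨F + G, V.add_mem hF hG, (Lp.coeFn_add F G).trans (hFf.add hGg)⟩
  zero_mem' := ⟨0, V.zero_mem, Lp.coeFn_zero ℝ 2 μ⟩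
  smul_mem' := by
    rintro c f ⟨F, hF, hFf⟩
    exact ⟨c • F, V.smul_mem c hF, (Lp.coeFn_smul c F).trans (hFf.const_smul c)⟩

theorem Submodule.le_ofL2_topologicalClosure_toL2 {S : Submodule ℝ (X → ℝ)}
    (hS : ∀ f ∈ S, MemLp f 2 μ) : S ≤ ((S.toL2 μ).topologicalClosure).ofL2 μ := fun f hf =>
  ⟨(hS f hf).toLp f, Submodule.le_topologicalClosure _ ⟨f, hf, (hS f hf).coeFn_toLp⟩,
    (hS f hf).coeFn_toLp⟩

theorem Submodule.mem_ofL2_of_forall_eLpNorm_sub_le {V : Submodule ℝ (Lp ℝ 2 μ)}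
    (hV : IsClosed (V : Set (Lp ℝ 2 μ))) {f : X → ℝ} (hf : MemLp f 2 μ)
    (h : ∀ ε : ℝ≥0∞, 0 < ε → ∃ g ∈ V.ofL2 μ, eLpNorm (f - g) 2 μ ≤ ε) : f ∈ V.ofL2 μ := by
  refine ⟨hf.toLp f, hV.closure_subset (EMetric.mem_closure_iff.2 fun ε hε => ?_),
    hf.coeFn_toLp⟩
  obtain ⟨δ, hδ, hδε⟩ := exists_between hε
  obtain ⟨g, ⟨G, hG, hGg⟩, hfg⟩ := h δ hδ
  refine ⟨G, hG, ?_⟩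
  rw [Lp.edist_def, eLpNorm_congr_ae (hf.coeFn_toLp.sub hGg)]
  exact hfg.trans_lt hδε

theorem Submodule.exists_eLpNorm_sub_lt_of_mem_ofL2_topologicalClosure
    {S : Submodule ℝ (X → ℝ)} {h : X → ℝ} (hh : h ∈ ((S.toL2 μ).topologicalClosure).ofL2 μ)
    {ε : ℝ≥0∞} (hε : 0 < ε) : ∃ g ∈ S, eLpNorm (h - g) 2 μ < ε := by
  obtain ⟨F, hF, hFh⟩ := hh
  rw [← SetLike.mem_coe, Submodule.topologicalClosure_coe] at hF
  obtain ⟨G, ⟨g, hg, hGg⟩, hFG⟩ := EMetric.mem_closure_iff.1 hF ε hε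
  refine ⟨g, hg, ?_⟩
  rwa [Lp.edist_def, eLpNorm_congr_ae (hFh.sub hGg)] at hFG

variable [MetricSpace X] [IsUltrametricDist X]

theorem HasCompactSupport.exists_mem_span_ballIndicators_eLpNorm_sub_le [ProperSpace X]
    [OpensMeasurableSpace X] [IsFiniteMeasureOnCompacts μ] {g : X → ℝ}
    (hgc : HasCompactSupport g) (hg : Continuous g) {ε : ℝ≥0∞} (hε : 0 < ε) :
    ∃ φ ∈ Submodule.span ℝ (ballIndicators X), eLpNorm (g - φ) 2 μ ≤ ε := by
  rcases (tsupport g).eq_empty_or_nonempty with hempty | ⟨x₀, -⟩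
  · have hg0 : g = 0 :=
      funext fun x => image_eq_zero_of_notMem_tsupport (hempty ▸ Set.notMem_empty x)
    exact ⟨0, Submodule.zero_mem _, by simp [hg0]⟩
  obtain ⟨R, hR, hsupp⟩ := hgc.isCompact.isBounded.subset_closedBall_lt 0 x₀
  obtain ⟨η, hη, hηε⟩ := ENNReal.exists_nnreal_pos_mul_lt (ENNReal.rpow_ne_top_of_nonneg
    (y := 1 / 2) (by norm_num) (measure_closedBall_lt_top (μ := μ) (x := x₀) (r := R)).ne) hε.ne'
  obtain ⟨φ, hφ, hbound⟩ := (hgc.uniformContinuous_of_continuous hg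
    ).exists_mem_span_ballIndicators_norm_sub_le hR (isCompact_closedBall x₀ R)
      (fun x hx => image_eq_zero_of_notMem_tsupport fun h => hx (hsupp h)) hη
  refine ⟨φ, hφ, ?_⟩
  calc eLpNorm (g - φ) 2 μ ≤ eLpNorm ((closedBall x₀ R).indicator fun _ => (η : ℝ)) 2 μ :=
        eLpNorm_mono_real hbound
    _ = η * μ (closedBall x₀ R) ^ (1 / 2 : ℝ) := by
        rw [eLpNorm_indicator_const measurableSet_closedBall two_ne_zero ENNReal.ofNat_ne_top]
        simp
    _ ≤ ε := hηε.le

theorem exists_eLpNorm_sub_lt_of_forall_isBallSet [ProperSpace X] [BorelSpace X]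
    [IsFiniteMeasureOnCompacts μ] {S : Submodule ℝ (X → ℝ)} (hS : ∀ f ∈ S, MemLp f 2 μ)
    (hball : ∀ C, IsBallSet C → ∀ ε : ℝ≥0∞, 0 < ε →
      ∃ g ∈ S, eLpNorm (C.indicator (fun _ => (1 : ℝ)) - g) 2 μ < ε)
    {h : X → ℝ} (hh : MemLp h 2 μ) {ε : ℝ≥0∞} (hε : 0 < ε) :
    ∃ g ∈ S, eLpNorm (h - g) 2 μ < ε := by
  set V := (S.toL2 μ).topologicalClosure
  have hV : IsClosed (V : Set (Lp ℝ 2 μ)) := (S.toL2 μ).isClosed_topologicalClosure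
  have hSV : S ≤ V.ofL2 μ := Submodule.le_ofL2_topologicalClosure_toL2 hS
  have hballV : Submodule.span ℝ (ballIndicators X) ≤ V.ofL2 μ := by
    refine Submodule.span_le.2 fun f ⟨B, hB, hf⟩ => hf ▸ ?_
    refine Submodule.mem_ofL2_of_forall_eLpNorm_sub_le hV
      (memLp_indicator_const 2 hB.measurableSet _ (Or.inr hB.measure_ne_top)) fun ε hε => ?_
    obtain ⟨g, hg, hlt⟩ := hball B hB ε hε
    exact ⟨g, hSV hg, hlt.le⟩
  have hcont : ∀ g : X → ℝ, HasCompactSupport g → Continuous g → MemLp g 2 μ → g ∈ V.ofL2 μ :=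
    fun g hgc hg hgm => Submodule.mem_ofL2_of_forall_eLpNorm_sub_le hV hgm fun ε hε =>
      let ⟨φ, hφ, hle⟩ := hgc.exists_mem_span_ballIndicators_eLpNorm_sub_le hg hε
      ⟨φ, hballV hφ, hle⟩
  refine Submodule.exists_eLpNorm_sub_lt_of_mem_ofL2_topologicalClosure
    (Submodule.mem_ofL2_of_forall_eLpNorm_sub_le hV hh fun ε hε => ?_) hε
  obtain ⟨g, hgc, hle, hg, hgm⟩ :=
    hh.exists_hasCompactSupport_eLpNorm_sub_le ENNReal.ofNat_ne_top hε.ne'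
  exact ⟨g, hcont g hgc hg hgm, hle⟩

end L2Density

section Completeness

variable {X : Type*} [MeasurableSpace X] {μ : Measure X}

theorem memLp_of_mem_span {T : Set (X → ℝ)} {p : ℝ≥0∞} (hT : ∀ f ∈ T, MemLp f p μ) {f : X → ℝ}
    (hf : f ∈ Submodule.span ℝ T) : MemLp f p μ := by
  induction hf using Submodule.span_induction with
  | mem f hf => exact hT f hf
  | zero => exact MemLp.zero
  | add f g _ _ hf hg => exact hf.add hg
  | smul c f _ hf => exact hf.const_smul c

theorem memLp_of_mem_eigenFnSet [MetricSpace X] [OpensMeasurableSpace X] {f : X → ℝ}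
    (hf : f ∈ eigenFnSet μ) : MemLp f 2 μ := by
  obtain ⟨C, B, hC, -, hP, rfl⟩ := hf
  exact (memLp_normInd hC.measurableSet 2).sub (memLp_normInd hP.isBallSet.measurableSet 2)

variable [MetricSpace X] [IsUltrametricDist X] [ProperSpace X] [BorelSpace X]
  [μ.IsOpenPosMeasure] [IsFiniteMeasureOnCompacts μ]

theorem exists_mem_span_eigenFnSet_eLpNorm_sub_lt (hμ : μ Set.univ = ⊤) {h : X → ℝ}
    (hh : MemLp h 2 μ) {ε : ℝ≥0∞} (hε : 0 < ε) :
    ∃ g ∈ Submodule.span ℝ (eigenFnSet μ), eLpNorm (h - g) 2 μ < ε :=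
  exists_eLpNorm_sub_lt_of_forall_isBallSet
    (fun _ => memLp_of_mem_span fun _ => memLp_of_mem_eigenFnSet)
    (fun _ hC _ => exists_mem_span_eigenFnSet_eLpNorm_indicator_sub_lt hμ hC) hh hε

theorem exists_mem_span_insert_eigenFnSet_eLpNorm_sub_lt [IsFiniteMeasure μ] {h : X → ℝ}
    (hh : MemLp h 2 μ) {ε : ℝ≥0∞} (hε : 0 < ε) :
    ∃ g ∈ Submodule.span ℝ (insert (fun _ => (1 : ℝ)) (eigenFnSet μ)),
      eLpNorm (h - g) 2 μ < ε := by
  refine exists_eLpNorm_sub_lt_of_forall_isBallSet (fun _ => memLp_of_mem_span ?_)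
    (fun _ hC _ => exists_mem_span_insert_eigenFnSet_eLpNorm_indicator_sub_lt hC) hh hε
  rintro f (rfl | hf)
  exacts [memLp_const 1, memLp_of_mem_eigenFnSet hf]

end Completeness

theorem isOpenPosMeasure_of_forall_closedBall {X : Type*} [MetricSpace X]
    [MeasurableSpace X] {μ : Measure X} (h : ∀ (x : X) (r : ℝ), 0 < r → 0 < μ (closedBall x r)) :
    μ.IsOpenPosMeasure := by
  refine ⟨fun U hU ⟨x, hx⟩ => ?_⟩
  obtain ⟨ε, hε, hball⟩ := Metric.isOpen_iff.1 hU x hx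
  exact ((h x (ε / 2) (half_pos hε)).trans_le
    (measure_mono ((closedBall_subset_ball (half_lt_self hε)).trans hball))).ne'

theorem statement_13_general
    {X : Type*} [MetricSpace X]
    [MeasurableSpace X] [BorelSpace X]
    (hd : ∀ x y z : X, dist x z ≤ max (dist x y) (dist y z))
    (hcb : ∀ (x : X) (r : ℝ), IsCompact (closedBall x r))
    (μ : Measure X)
    (hμpos : ∀ (x : X) (r : ℝ), 0 < r → 0 < μ (closedBall x r))
    (hμfin : ∀ (x : X) (r : ℝ), 0 < r → μ (closedBall x r) < ⊤)
    (σ : ℝ → ℝ)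
    (hσmono : StrictMonoOn σ (Set.Ici 0))
    (hσrange : ∀ r : ℝ, 0 ≤ r → σ r ∈ Set.Icc (0:ℝ) 1)
    (hσzero : Tendsto σ (nhdsWithin 0 (Set.Ioi 0)) (nhds 0))
    (ν : Measure ℝ)
    (hν : ∀ a b : ℝ, 0 ≤ a → a ≤ b →
      ν (Set.Ico a b) = ENNReal.ofReal (σ b - σ a))
 :
    (∀ C B : Set X, IsBallSet C → C ≠ Set.univ → IsParent B C →
      (∀ s : ℝ, 0 < s → s < minRad B →
        ∀ x : X, avgOp μ s (eigenFn μ C B) x = eigenFn μ C B x) ∧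
      (∀ s : ℝ, minRad B ≤ s →
        ∀ x : X, avgOp μ s (eigenFn μ C B) x = 0) ∧
      (∀ x : X, isoOp μ ν (eigenFn μ C B) x = σ (minRad B) * eigenFn μ C B x)) ∧
    (μ Set.univ = ⊤ →
      ∀ h : X → ℝ, MemLp h 2 μ → ∀ ε : ℝ, 0 < ε →
        ∃ g ∈ Submodule.span ℝ
            {f : X → ℝ | ∃ C B : Set X,
              IsBallSet C ∧ C ≠ Set.univ ∧ IsParent B C ∧ f = eigenFn μ C B},
          eLpNorm (h - g) 2 μ < ENNReal.ofReal ε) ∧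
    (μ Set.univ < ⊤ →
      ∀ h : X → ℝ, MemLp h 2 μ → ∀ ε : ℝ, 0 < ε →
        ∃ g ∈ Submodule.span ℝ
            (insert (fun _ : X => (1:ℝ))
              {f : X → ℝ | ∃ C B : Set X,
                IsBallSet C ∧ C ≠ Set.univ ∧ IsParent B C ∧ f = eigenFn μ C B}),
          eLpNorm (h - g) 2 μ < ENNReal.ofReal ε) := by
  have : IsUltrametricDist X := ⟨hd⟩
  have : ProperSpace X := ⟨hcb⟩
  have : μ.IsOpenPosMeasure := isOpenPosMeasure_of_forall_closedBall hμpos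
  have : IsLocallyFiniteMeasure μ :=
    ⟨fun x => ⟨closedBall x 1, closedBall_mem_nhds x one_pos, hμfin x 1 one_pos⟩⟩
  have hσ0 : σ 0 = 0 :=
    apply_zero_eq_zero_of_tendsto hσmono.monotoneOn (hσrange 0 le_rfl).1 hσzero
  have hν0 : ν {0} = 0 := measure_singleton_zero_eq_zero hν hσ0 hσzero
  refine ⟨fun C B hC _ hP => ⟨fun s hs hsB => avgOp_eigenFn_of_lt_minRad hC hP hs hsB,
    fun s hsB => avgOp_eigenFn_of_minRad_le hC hP hsB, fun x => ?_⟩,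
    fun hμ h hh ε hε => exists_mem_span_eigenFnSet_eLpNorm_sub_lt hμ hh (ENNReal.ofReal_pos.2 hε),
    fun hμ h hh ε hε => ?_⟩
  · rw [isoOp_eq_of_avgOp hν0 (fun r hr hrB => avgOp_eigenFn_of_lt_minRad hC hP hr hrB x)
      (fun r hrB => avgOp_eigenFn_of_minRad_le hC hP hrB x), measureReal_def,
      measure_Ioo_zero_eq_ofReal hν hσ0 hν0 (minRad_nonneg B),
      ENNReal.toReal_ofReal (hσrange _ (minRad_nonneg B)).1]
  · have : IsFiniteMeasure μ := ⟨hμ⟩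
    exact exists_mem_span_insert_eigenFnSet_eLpNorm_sub_lt hh (ENNReal.ofReal_pos.2 hε)

theorem statement_13
    {X : Type*} [MetricSpace X] [TopologicalSpace.SeparableSpace X]
    [MeasurableSpace X] [BorelSpace X]
    (hd : ∀ x y z : X, dist x z ≤ max (dist x y) (dist y z))
    (hcb : ∀ (x : X) (r : ℝ), IsCompact (closedBall x r))
    (μ : Measure X)
    (hμpos : ∀ (x : X) (r : ℝ), 0 < r → 0 < μ (closedBall x r))
    (hμfin : ∀ (x : X) (r : ℝ), 0 < r → μ (closedBall x r) < ⊤)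
    (σ : ℝ → ℝ)
    (hσmono : StrictMonoOn σ (Set.Ici 0))
    (hσrange : ∀ r : ℝ, 0 ≤ r → σ r ∈ Set.Icc (0:ℝ) 1)
    (hσlc : ∀ r : ℝ, 0 < r → ContinuousWithinAt σ (Set.Iic r) r)
    (hσzero : Tendsto σ (nhdsWithin 0 (Set.Ioi 0)) (nhds 0))
    (hσtop : Tendsto σ atTop (nhds 1))
    (ν : Measure ℝ)
    (hν : ∀ a b : ℝ, 0 ≤ a → a ≤ b →
      ν (Set.Ico a b) = ENNReal.ofReal (σ b - σ a))
    (hνneg : ν (Set.Iio 0) = 0)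
 :
    (∀ C B : Set X, IsBallSet C → C ≠ Set.univ → IsParent B C →
      (∀ s : ℝ, 0 < s → s < minRad B →
        ∀ x : X, avgOp μ s (eigenFn μ C B) x = eigenFn μ C B x) ∧
      (∀ s : ℝ, minRad B ≤ s →
        ∀ x : X, avgOp μ s (eigenFn μ C B) x = 0) ∧
      (∀ x : X, isoOp μ ν (eigenFn μ C B) x = σ (minRad B) * eigenFn μ C B x)) ∧
    (μ Set.univ = ⊤ →
      ∀ h : X → ℝ, MemLp h 2 μ → ∀ ε : ℝ, 0 < ε →
        ∃ g ∈ Submodule.span ℝ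
            {f : X → ℝ | ∃ C B : Set X,
              IsBallSet C ∧ C ≠ Set.univ ∧ IsParent B C ∧ f = eigenFn μ C B},
          eLpNorm (h - g) 2 μ < ENNReal.ofReal ε) ∧
    (μ Set.univ < ⊤ →
      ∀ h : X → ℝ, MemLp h 2 μ → ∀ ε : ℝ, 0 < ε →
        ∃ g ∈ Submodule.span ℝ
            (insert (fun _ : X => (1:ℝ))
              {f : X → ℝ | ∃ C B : Set X,
                IsBallSet C ∧ C ≠ Set.univ ∧ IsParent B C ∧ f = eigenFn μ C B}),
          eLpNorm (h - g) 2 μ < ENNReal.ofReal ε) :=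
  statement_13_general hd hcb μ hμpos hμfin σ hσmono hσrange hσzero ν hν
end

section
/- For every x ∈ X, the set Λ(x) = {d(x,y) : y ∈ X, y ≠ x} of distances from x has no accumulation point in (0,∞); consequently Λ(x) is at most countable. -/
/-!
In an ultrametric space every sphere `sphere x r` with `r ≠ 0` is open. Hence `dist x` is
locally constant off `x`, so it takes only finitely many values on a compact set avoiding `x`;
as the annuli `a ≤ d(x, y) ≤ b` with `0 < a` are compact, `Λ(x)` meets every compact subset of
`(0, ∞)` in a finite set. Countability comes from the spheres `sphere x r`, `r ∈ Λ(x)`, being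
disjoint nonempty open sets in a separable space.
-/

open Metric Filter Topology

-- The set `Λ(x)` of the statement.
def distancesFrom {X : Type*} [Dist X] (x : X) : Set ℝ :=
  {s : ℝ | ∃ y : X, y ≠ x ∧ s = dist x y}

section Ultrametric

variable {X : Type*} [MetricSpace X] [IsUltrametricDist X]

theorem finite_image_dist_of_isCompact {x : X} {K : Set X} (hK : IsCompact K) (hx : x ∉ K) :
    (dist x '' K).Finite := by
  have hsphere : ∀ y ∈ K, sphere x (dist y x) ∈ 𝓝 y := fun y hy =>
    (IsUltrametricDist.isOpen_sphere x (dist_ne_zero.2 (ne_of_mem_of_not_mem hy hx))).mem_nhds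
      (mem_sphere.2 rfl)
  obtain ⟨t, htK, hcover⟩ := hK.elim_nhds_subcover _ hsphere
  refine (t.finite_toSet.image (dist x)).subset ?_
  rintro _ ⟨y, hy, rfl⟩
  obtain ⟨z, hz, hyz⟩ := Set.mem_iUnion₂.1 (hcover hy)
  exact ⟨z, hz, by rw [dist_comm x y, dist_comm x z, mem_sphere.1 hyz]⟩

theorem finite_distancesFrom_inter_Icc [ProperSpace X] (x : X) {a : ℝ} (ha : 0 < a) (b : ℝ) :
    (distancesFrom x ∩ Set.Icc a b).Finite := by
  have hK : IsCompact (closedBall x b \ ball x a) := (isCompact_closedBall x b).diff isOpen_ball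
  refine (finite_image_dist_of_isCompact hK fun h => h.2 (mem_ball_self ha)).subset ?_
  rintro _ ⟨⟨y, -, rfl⟩, hay, hyb⟩
  exact ⟨y, ⟨mem_closedBall'.2 hyb, fun h => (mem_ball'.1 h).not_ge hay⟩, rfl⟩

theorem not_accPt_distancesFrom [ProperSpace X] (x : X) {r : ℝ} (hr : 0 < r) :
    ¬ AccPt r (𝓟 (distancesFrom x)) := by
  intro hacc
  have hIcc : Set.Icc (r / 2) (2 * r) ∈ 𝓝 r := Icc_mem_nhds (by linarith) (by linarith)
  refine Set.Infinite.of_accPt (hacc.nhds_inter hIcc) ?_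
  rw [Set.inter_comm]
  exact finite_distancesFrom_inter_Icc x (half_pos hr) _

theorem countable_distancesFrom [TopologicalSpace.SeparableSpace X] (x : X) :
    (distancesFrom x).Countable := by
  refine Set.PairwiseDisjoint.countable_of_isOpen (s := sphere x) ?_ ?_ ?_
  · exact fun r _ s _ hrs => Set.disjoint_left.2 fun y hr hs => hrs (hr.symm.trans hs)
  · rintro _ ⟨y, hy, rfl⟩
    exact IsUltrametricDist.isOpen_sphere x (dist_ne_zero.2 hy.symm)
  · rintro _ ⟨y, -, rfl⟩
    exact ⟨y, mem_sphere'.2 rfl⟩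

end Ultrametric

theorem statement_14
    {X : Type*} [MetricSpace X] [TopologicalSpace.SeparableSpace X]
    (hd : ∀ x y z : X, dist x z ≤ max (dist x y) (dist y z))
    (hcb : ∀ (x : X) (r : ℝ), IsCompact (closedBall x r))
    (x : X) :
    (∀ r : ℝ, 0 < r →
      ¬ AccPt r (Filter.principal {s : ℝ | ∃ y : X, y ≠ x ∧ s = dist x y})) ∧
    Set.Countable {s : ℝ | ∃ y : X, y ≠ x ∧ s = dist x y} := by
  have : IsUltrametricDist X := ⟨hd⟩
  have : ProperSpace X := ⟨hcb⟩
  exact ⟨fun r hr => not_accPt_distancesFrom x hr, countable_distancesFrom x⟩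
end

section
/- (Strong Liouville property) If f : X → [0,∞) is a Borel function satisfying P f(x) = f(x) for every x ∈ X, then f is constant. -/
/-!
In an ultrametric space two closed balls of the same radius are equal or disjoint, so
`Q_a Q_r = Q_{max a r}` for positive radii. Applying `Q_a` to `f = P f` therefore gives the renewal
equation `Q_a f = σ(a) Q_a f + ∫_{[a,∞)} Q_r f dσ(r)`. For `d = d(x, y)` the averages `Q_r f(x)`
and `Q_r f(y)` agree when `r ≥ d`, and the renewal equation bounds the largest gap between them on
`(0, d)` by `σ(d) < 1` times itself; the gap is finite because `f(x) < ∞` and `σ` charges every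
interval `[a, ∞)`. Hence `Q_r f(x) = Q_r f(y)` for all `r > 0`, and integrating against `dσ` gives
`f(x) = P f(x) = P f(y) = f(y)`.
-/

open MeasureTheory Metric Filter
open scoped ENNReal Classical

/-- The averaging operator on non-negative functions. -/
noncomputable def avgLin {X : Type*} [MetricSpace X] [MeasurableSpace X]
    (μ : Measure X) (r : ℝ) (f : X → ℝ≥0∞) (x : X) : ℝ≥0∞ :=
  (μ (closedBall x r))⁻¹ * ∫⁻ y in closedBall x r, f y ∂μ

/-- The isotropic Markov operator on non-negative functions. -/
noncomputable def isoLin {X : Type*} [MetricSpace X] [MeasurableSpace X]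
    (μ : Measure X) (ν : Measure ℝ) (f : X → ℝ≥0∞) (x : X) : ℝ≥0∞ :=
  ∫⁻ r in Set.Ici (0:ℝ), avgLin μ r f x ∂ν

open Set

lemma ENNReal.le_div_one_sub_of_le_mul_add {x c t : ℝ≥0∞} (hx : x ≠ ∞) (hc : c < 1)
    (h : x ≤ c * x + t) : x ≤ t / (1 - c) := by
  rw [ENNReal.le_div_iff_mul_le (Or.inl (tsub_pos_of_lt hc).ne') (Or.inl (by simp)),
    mul_comm, ENNReal.sub_mul (fun _ _ => hx), one_mul]
  exact tsub_le_iff_right.2 (by rwa [add_comm])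

section Renewal

variable {ν : Measure ℝ} {F G : ℝ → ℝ≥0∞} {d : ℝ}

lemma le_of_renewal (hc : ν (Ico 0 d) < 1)
    (hF : ∀ a ∈ Ioo 0 d, F a = ν (Ico 0 a) * F a + ∫⁻ r in Ici a, F r ∂ν)
    (hG : ∀ a ∈ Ioo 0 d, G a = ν (Ico 0 a) * G a + ∫⁻ r in Ici a, G r ∂ν)
    (htail : EqOn F G (Ici d)) (hFfin : ∀ a ∈ Ioo 0 d, F a ≠ ∞)
    (hFint : ∫⁻ r in Ici 0, F r ∂ν ≠ ∞) : ∀ a ∈ Ioo 0 d, F a ≤ G a := by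
  have hbound : ∀ a ∈ Ioo 0 d, F a ≤ (∫⁻ r in Ici 0, F r ∂ν) / (1 - ν (Ico 0 d)) := by
    intro a ha
    refine ENNReal.le_div_one_sub_of_le_mul_add (hFfin a ha) hc ?_
    calc F a = ν (Ico 0 a) * F a + ∫⁻ r in Ici a, F r ∂ν := hF a ha
      _ ≤ ν (Ico 0 d) * F a + ∫⁻ r in Ici 0, F r ∂ν := by
        gcongr
        exacts [ha.2.le, ha.1.le]
  -- The largest gap `S` of `F` over `G` on `(0, d)` will satisfy `S ≤ ν [0, d) * S`.
  set S := ⨆ a ∈ Ioo 0 d, F a - G a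
  have hgap : ∀ a ∈ Ioo 0 d, F a - G a ≤ S := fun a ha => le_iSup₂ (f := fun a _ => F a - G a) a ha
  have hS : S ≠ ∞ := ne_top_of_le_ne_top (ENNReal.div_ne_top hFint (tsub_pos_of_lt hc).ne')
    (iSup₂_le fun a ha => tsub_le_self.trans (hbound a ha))
  have hstep : ∀ a ∈ Ioo 0 d, F a ≤ ν (Ico 0 d) * S + G a := by
    intro a ha
    have hsplit : ∀ H : ℝ → ℝ≥0∞,
        ∫⁻ r in Ici a, H r ∂ν = ∫⁻ r in Ico a d, H r ∂ν + ∫⁻ r in Ici d, H r ∂ν := fun H => by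
      rw [← Ico_union_Ici_eq_Ici ha.2.le, lintegral_union measurableSet_Ici
        ((Iio_disjoint_Ici le_rfl).mono_left Ico_subset_Iio_self)]
    have hmass : ν (Ico 0 a) + ν (Ico a d) = ν (Ico 0 d) := by
      rw [← measure_union Ico_disjoint_Ico_same measurableSet_Ico,
        Ico_union_Ico_eq_Ico ha.1.le ha.2.le]
    calc F a = ν (Ico 0 a) * F a + (∫⁻ r in Ico a d, F r ∂ν + ∫⁻ r in Ici d, F r ∂ν) := by
          rw [← hsplit, ← hF a ha]
      _ ≤ ν (Ico 0 a) * (S + G a) + (∫⁻ r in Ico a d, (S + G r) ∂ν + ∫⁻ r in Ici d, G r ∂ν) := by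
          gcongr _ * ?_ + (?_ + ?_)
          · exact tsub_le_iff_right.1 (hgap a ha)
          · exact setLIntegral_mono' measurableSet_Ico fun r hr =>
              tsub_le_iff_right.1 (hgap r ⟨ha.1.trans_le hr.1, hr.2⟩)
          · exact (setLIntegral_congr_fun measurableSet_Ici htail).le
      _ = (ν (Ico 0 a) + ν (Ico a d)) * S + (ν (Ico 0 a) * G a + ∫⁻ r in Ici a, G r ∂ν) := by
          rw [lintegral_add_left measurable_const, setLIntegral_const, hsplit]
          ring
      _ = ν (Ico 0 d) * S + G a := by rw [hmass, ← hG a ha]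
  have hcontract : S ≤ ν (Ico 0 d) * S + 0 := by
    rw [add_zero]
    exact iSup₂_le fun a ha => tsub_le_iff_right.2 (hstep a ha)
  have hS0 : S = 0 := by simpa using ENNReal.le_div_one_sub_of_le_mul_add hS hc hcontract
  exact fun a ha => tsub_eq_zero_iff_le.1 (le_antisymm (hS0 ▸ hgap a ha) zero_le)

lemma eqOn_of_renewal (hc : ν (Ico 0 d) < 1)
    (hF : ∀ a ∈ Ioo 0 d, F a = ν (Ico 0 a) * F a + ∫⁻ r in Ici a, F r ∂ν)
    (hG : ∀ a ∈ Ioo 0 d, G a = ν (Ico 0 a) * G a + ∫⁻ r in Ici a, G r ∂ν)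
    (htail : EqOn F G (Ici d)) (hFfin : ∀ a ∈ Ioo 0 d, F a ≠ ∞) (hGfin : ∀ a ∈ Ioo 0 d, G a ≠ ∞)
    (hFint : ∫⁻ r in Ici 0, F r ∂ν ≠ ∞) (hGint : ∫⁻ r in Ici 0, G r ∂ν ≠ ∞) :
    EqOn F G (Ioo 0 d) := fun a ha =>
  le_antisymm (le_of_renewal hc hF hG htail hFfin hFint a ha)
    (le_of_renewal hc hG hF htail.symm hGfin hGint a ha)

end Renewal

section Averages

variable {X : Type*} [MetricSpace X] [MeasurableSpace X] {μ : Measure X} {g : X → ℝ≥0∞}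

lemma avgLin_ne_top {ν : Measure ℝ} {a : ℝ} {z : X} (ha : 0 ≤ a) (h0 : μ (closedBall z a) ≠ 0)
    (htop : ∀ r, a ≤ r → μ (closedBall z r) ≠ ∞) (hν : ν (Ici a) ≠ 0)
    (hz : isoLin μ ν g z ≠ ∞) : avgLin μ a g z ≠ ∞ := by
  intro hinf
  have hball : ∫⁻ w in closedBall z a, g w ∂μ = ∞ :=
    ((ENNReal.mul_eq_top.1 hinf).resolve_right fun h => ENNReal.inv_ne_top.2 h0 h.1).2
  have hlarge : ∀ r ∈ Ici a, avgLin μ r g z = ∞ := fun r hr => by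
    rw [avgLin, top_unique (hball.symm.trans_le
        (lintegral_mono_set (closedBall_subset_closedBall hr))),
      ENNReal.mul_top (ENNReal.inv_ne_zero.2 (htop r hr))]
  refine hz (top_unique ?_)
  calc ∞ = ∫⁻ r in Ici a, avgLin μ r g z ∂ν := by
        rw [setLIntegral_congr_fun measurableSet_Ici hlarge, setLIntegral_const, ENNReal.top_mul hν]
    _ ≤ isoLin μ ν g z := lintegral_mono_set (Ici_subset_Ici.2 ha)

variable [OpensMeasurableSpace X] [SecondCountableTopology X] [SFinite μ]

lemma measurable_setLIntegral_closedBall (hg : Measurable g) :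
    Measurable fun p : X × ℝ => ∫⁻ w in closedBall p.1 p.2, g w ∂μ := by
  have hs : MeasurableSet {q : (X × ℝ) × X | dist q.2 q.1.1 ≤ q.1.2} :=
    (isClosed_le (by fun_prop) (by fun_prop)).measurableSet
  simp_rw [← lintegral_indicator measurableSet_closedBall]
  exact ((hg.comp measurable_snd).indicator hs).lintegral_prod_right'

lemma measurable_measure_closedBall : Measurable fun p : X × ℝ => μ (closedBall p.1 p.2) := by
  simpa using measurable_setLIntegral_closedBall (μ := μ) (g := 1) measurable_const

lemma measurable_avgLin (hg : Measurable g) : Measurable fun p : X × ℝ => avgLin μ p.2 g p.1 :=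
  measurable_measure_closedBall.inv.mul (measurable_setLIntegral_closedBall hg)

lemma avgLin_isoLin {ν : Measure ℝ} [SFinite (ν.restrict (Ici 0))] (hg : Measurable g) (a : ℝ)
    (z : X) :
    avgLin μ a (isoLin μ ν g) z = ∫⁻ r in Ici 0, avgLin μ a (avgLin μ r g) z ∂ν := by
  have hF := measurable_avgLin (μ := μ) hg
  have hball : Measurable fun r => ∫⁻ w in closedBall z a, avgLin μ r g w ∂μ :=
    Measurable.lintegral_prod_left (f := fun w r => avgLin μ r g w) hF
  change (μ (closedBall z a))⁻¹ * ∫⁻ w in closedBall z a, isoLin μ ν g w ∂μ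
    = ∫⁻ r in Ici 0, (μ (closedBall z a))⁻¹ * ∫⁻ w in closedBall z a, avgLin μ r g w ∂μ ∂ν
  simp only [isoLin]
  rw [lintegral_lintegral_swap hF.aemeasurable, ← lintegral_const_mul _ hball]

end Averages

section Ultrametric

variable {X : Type*} [MetricSpace X] [IsUltrametricDist X] [MeasurableSpace X] {μ : Measure X}
  {g : X → ℝ≥0∞}

lemma avgLin_eq_of_dist_le {r : ℝ} {z w : X} (h : dist z w ≤ r) :
    avgLin μ r g z = avgLin μ r g w := by
  rw [avgLin, avgLin, IsUltrametricDist.closedBall_eq_of_mem (mem_closedBall'.2 h)]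

variable [OpensMeasurableSpace X]

lemma avgLin_avgLin_of_ge {r a : ℝ} {z : X} (har : a ≤ r) (h0 : μ (closedBall z a) ≠ 0)
    (htop : μ (closedBall z a) ≠ ∞) : avgLin μ a (avgLin μ r g) z = avgLin μ r g z := by
  rw [avgLin, setLIntegral_congr_fun measurableSet_closedBall fun w hw =>
      avgLin_eq_of_dist_le ((mem_closedBall.1 hw).trans har),
    setLIntegral_const, mul_comm, mul_assoc, ENNReal.mul_inv_cancel h0 htop, mul_one]

-- Normalising at `w` rather than at `z` (the two balls coincide) makes the `z`-integral obtained
-- by Fubini in `setLIntegral_avgLin` the measure of a ball.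
lemma avgLin_eq_lintegral_indicator (hg : Measurable g) (r : ℝ) (z : X) :
    avgLin μ r g z = ∫⁻ w, (closedBall z r).indicator (fun w => g w / μ (closedBall w r)) w ∂μ := by
  rw [lintegral_indicator measurableSet_closedBall, avgLin, ← lintegral_const_mul _ hg]
  refine setLIntegral_congr_fun measurableSet_closedBall fun w hw => ?_
  rw [IsUltrametricDist.closedBall_eq_of_mem hw, div_eq_mul_inv, mul_comm]

variable [SecondCountableTopology X] [SFinite μ]

lemma setLIntegral_avgLin (hg : Measurable g) (r : ℝ) (s : Set X) :
    ∫⁻ z in s, avgLin μ r g z ∂μ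
      = ∫⁻ w, μ (closedBall w r ∩ s) * (g w / μ (closedBall w r)) ∂μ := by
  have hmeas : Measurable (Function.uncurry fun z w =>
      (closedBall z r).indicator (fun w => g w / μ (closedBall w r)) w) := by
    have hball : Measurable fun w : X => μ (closedBall w r) :=
      measurable_measure_closedBall.comp (measurable_id.prodMk measurable_const)
    exact ((hg.comp measurable_snd).div (hball.comp measurable_snd)).indicator
      (isClosed_le (by fun_prop) (by fun_prop)).measurableSet
  simp_rw [avgLin_eq_lintegral_indicator hg r]
  rw [lintegral_lintegral_swap hmeas.aemeasurable]
  refine lintegral_congr fun w => ?_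
  have hmem : ∀ z, w ∈ closedBall z r ↔ z ∈ closedBall w r := fun z => mem_closedBall_comm
  simp_rw [indicator, hmem, ← indicator_apply (closedBall w r) (fun _ => g w / μ (closedBall w r))]
  rw [lintegral_indicator_const measurableSet_closedBall,
    Measure.restrict_apply measurableSet_closedBall, mul_comm]

lemma setLIntegral_closedBall_avgLin (hg : Measurable g) {x : X} {r a : ℝ} (hra : r ≤ a)
    (h0 : ∀ w, μ (closedBall w r) ≠ 0) (htop : ∀ w, μ (closedBall w r) ≠ ∞) :
    ∫⁻ z in closedBall x a, avgLin μ r g z ∂μ = ∫⁻ z in closedBall x a, g z ∂μ := by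
  rw [setLIntegral_avgLin hg, ← lintegral_indicator measurableSet_closedBall]
  refine lintegral_congr fun w => ?_
  by_cases hw : w ∈ closedBall x a
  · have hsub : closedBall w r ⊆ closedBall x a :=
      IsUltrametricDist.closedBall_eq_of_mem hw ▸ closedBall_subset_closedBall hra
    rw [inter_eq_left.2 hsub, indicator_of_mem hw, ENNReal.mul_div_cancel (h0 w) (htop w)]
  · have hdisj : closedBall w r ∩ closedBall x a = ∅ := by
      refine eq_empty_of_forall_notMem fun z hz => hw ?_
      rw [IsUltrametricDist.closedBall_eq_of_mem hz.2]
      exact closedBall_subset_closedBall hra (mem_closedBall_comm.1 hz.1)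
    rw [hdisj, indicator_of_notMem hw, measure_empty, zero_mul]

lemma avgLin_avgLin_of_le (hg : Measurable g) {r a : ℝ} (hra : r ≤ a)
    (h0 : ∀ w, μ (closedBall w r) ≠ 0) (htop : ∀ w, μ (closedBall w r) ≠ ∞) (z : X) :
    avgLin μ a (avgLin μ r g) z = avgLin μ a g z := by
  rw [avgLin, avgLin, setLIntegral_closedBall_avgLin hg hra h0 htop]

end Ultrametric

section Harmonic

variable {X : Type*} [MetricSpace X] [IsUltrametricDist X] [MeasurableSpace X]
  [OpensMeasurableSpace X] [SecondCountableTopology X] {μ : Measure X} [SFinite μ]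
  {ν : Measure ℝ} [SFinite (ν.restrict (Ici 0))] {g : X → ℝ≥0∞}

lemma avgLin_eq_renewal_of_isoLin_eq_self (hg : Measurable g) (hharm : isoLin μ ν g = g)
    (hν0 : ν {0} = 0) (h0 : ∀ x r, 0 < r → μ (closedBall x r) ≠ 0)
    (htop : ∀ x r, 0 < r → μ (closedBall x r) ≠ ∞)
    {a : ℝ} (ha : 0 < a) (z : X) :
    avgLin μ a g z = ν (Ico 0 a) * avgLin μ a g z + ∫⁻ r in Ici a, avgLin μ r g z ∂ν := by
  conv_lhs => rw [← hharm, avgLin_isoLin hg]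
  rw [← Ico_union_Ici_eq_Ici ha.le, lintegral_union measurableSet_Ici
    ((Iio_disjoint_Ici le_rfl).mono_left Ico_subset_Iio_self),
    Measure.restrict_congr_set (Ioo_ae_eq_Ico' hν0).symm]
  congr 1
  · rw [setLIntegral_congr_fun measurableSet_Ioo fun r hr =>
        avgLin_avgLin_of_le hg hr.2.le (h0 · r hr.1) (htop · r hr.1) z,
      setLIntegral_const, measure_congr (Ioo_ae_eq_Ico' hν0), mul_comm]
  · exact setLIntegral_congr_fun measurableSet_Ici fun r hr =>
      avgLin_avgLin_of_ge hr (h0 z a ha) (htop z a ha)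

theorem eq_of_isoLin_eq_self (hg : Measurable g) (hharm : isoLin μ ν g = g)
    (hgtop : ∀ z, g z ≠ ∞) (h0 : ∀ x r, 0 < r → μ (closedBall x r) ≠ 0)
    (htop : ∀ x r, 0 < r → μ (closedBall x r) ≠ ∞) (hν0 : ν {0} = 0)
    (hνlt : ∀ d, 0 ≤ d → ν (Ico 0 d) < 1) (hνpos : ∀ a, 0 ≤ a → ν (Ici a) ≠ 0) (x y : X) :
    g x = g y := by
  set d := dist x y
  have hren : ∀ z, ∀ a ∈ Ioo 0 d,
      avgLin μ a g z = ν (Ico 0 a) * avgLin μ a g z + ∫⁻ r in Ici a, avgLin μ r g z ∂ν :=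
    fun z a ha => avgLin_eq_renewal_of_isoLin_eq_self hg hharm hν0 h0 htop ha.1 z
  have hint : ∀ z, isoLin μ ν g z ≠ ∞ := fun z => (congrFun hharm z).trans_ne (hgtop z)
  have hfin : ∀ z, ∀ a ∈ Ioo 0 d, avgLin μ a g z ≠ ∞ := fun z a ha =>
    avgLin_ne_top ha.1.le (h0 z a ha.1) (fun r hr => htop z r (ha.1.trans_le hr))
      (hνpos a ha.1.le) (hint z)
  have hfar : EqOn (fun r => avgLin μ r g x) (fun r => avgLin μ r g y) (Ici d) :=
    fun r hr => avgLin_eq_of_dist_le hr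
  have hnear : EqOn (fun r => avgLin μ r g x) (fun r => avgLin μ r g y) (Ioo 0 d) :=
    eqOn_of_renewal (hνlt d dist_nonneg) (hren x) (hren y) hfar (hfin x) (hfin y)
      (hint x) (hint y)
  calc g x = isoLin μ ν g x := (congrFun hharm x).symm
    _ = isoLin μ ν g y := by
      rw [isoLin, isoLin, Measure.restrict_congr_set (Ioi_ae_eq_Ici' hν0).symm]
      refine setLIntegral_congr_fun measurableSet_Ioi fun r hr => ?_
      rcases lt_or_ge r d with hrd | hrd
      exacts [hnear ⟨hr, hrd⟩, hfar hrd]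
    _ = g y := congrFun hharm y

end Harmonic

section DistanceDistribution

variable {σ : ℝ → ℝ} {ν : Measure ℝ}

lemma measure_Ico_zero_lt_one (hσmono : StrictMonoOn σ (Ici 0))
    (hσrange : ∀ r, 0 ≤ r → σ r ∈ Icc (0 : ℝ) 1)
    (hν : ∀ a b : ℝ, 0 ≤ a → a ≤ b → ν (Ico a b) = ENNReal.ofReal (σ b - σ a))
    {d : ℝ} (hd : 0 ≤ d) : ν (Ico 0 d) < 1 := by
  have hd1 : σ d < σ (d + 1) := hσmono hd (mem_Ici.2 (by linarith)) (lt_add_one d)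
  have h0 := (hσrange 0 le_rfl).1
  have h1 := (hσrange (d + 1) (by linarith)).2
  rw [hν 0 d le_rfl hd, ENNReal.ofReal_lt_one]
  linarith

lemma measure_Ici_ne_zero (hσmono : StrictMonoOn σ (Ici 0))
    (hν : ∀ a b : ℝ, 0 ≤ a → a ≤ b → ν (Ico a b) = ENNReal.ofReal (σ b - σ a))
    {a : ℝ} (ha : 0 ≤ a) : ν (Ici a) ≠ 0 := by
  have hpos : 0 < ν (Ico a (a + 1)) := by
    rw [hν a (a + 1) ha (by linarith), ENNReal.ofReal_pos, sub_pos]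
    exact hσmono ha (mem_Ici.2 (by linarith)) (lt_add_one a)
  exact (hpos.trans_le (measure_mono Ico_subset_Ici_self)).ne'

lemma measure_singleton_zero_eq_zero_s15 (hσzero : Tendsto σ (nhdsWithin 0 (Ioi 0)) (nhds 0))
    (hσ0 : 0 ≤ σ 0)
    (hν : ∀ a b : ℝ, 0 ≤ a → a ≤ b → ν (Ico a b) = ENNReal.ofReal (σ b - σ a)) :
    ν {0} = 0 := by
  refine nonpos_iff_eq_zero.1 (ge_of_tendsto (ENNReal.ofReal_zero ▸
    (ENNReal.continuous_ofReal.tendsto 0).comp hσzero) ?_)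
  filter_upwards [self_mem_nhdsWithin] with b (hb : 0 < b)
  calc ν {0} ≤ ν (Ico 0 b) := measure_mono (singleton_subset_iff.2 ⟨le_rfl, hb⟩)
    _ = ENNReal.ofReal (σ b - σ 0) := hν 0 b le_rfl hb.le
    _ ≤ ENNReal.ofReal (σ b) := ENNReal.ofReal_le_ofReal (by linarith)

lemma isFiniteMeasure_restrict_Ici_zero (hσmono : StrictMonoOn σ (Ici 0))
    (hσrange : ∀ r, 0 ≤ r → σ r ∈ Icc (0 : ℝ) 1)
    (hν : ∀ a b : ℝ, 0 ≤ a → a ≤ b → ν (Ico a b) = ENNReal.ofReal (σ b - σ a)) :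
    IsFiniteMeasure (ν.restrict (Ici 0)) := by
  refine ⟨?_⟩
  rw [Measure.restrict_apply_univ, ← iUnion_Ico_right,
    Monotone.measure_iUnion fun b c hbc => Ico_subset_Ico_right hbc]
  refine lt_of_le_of_lt (iSup_le fun b => ?_) ENNReal.one_lt_top
  rcases le_or_gt 0 b with hb | hb
  · exact (measure_Ico_zero_lt_one hσmono hσrange hν hb).le
  · simp [Ico_eq_empty_of_le hb.le]

end DistanceDistribution

theorem statement_15_general
    {X : Type*} [MetricSpace X] [TopologicalSpace.SeparableSpace X]
    [MeasurableSpace X] [BorelSpace X]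
    (hd : ∀ x y z : X, dist x z ≤ max (dist x y) (dist y z))
    (μ : Measure X)
    (hμpos : ∀ (x : X) (r : ℝ), 0 < r → 0 < μ (closedBall x r))
    (hμfin : ∀ (x : X) (r : ℝ), 0 < r → μ (closedBall x r) < ⊤)
    (σ : ℝ → ℝ)
    (hσmono : StrictMonoOn σ (Set.Ici 0))
    (hσrange : ∀ r : ℝ, 0 ≤ r → σ r ∈ Set.Icc (0:ℝ) 1)
    (hσzero : Tendsto σ (nhdsWithin 0 (Set.Ioi 0)) (nhds 0))
    (ν : Measure ℝ)
    (hν : ∀ a b : ℝ, 0 ≤ a → a ≤ b →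
      ν (Set.Ico a b) = ENNReal.ofReal (σ b - σ a))
    (f : X → ℝ) (hf : Measurable f) (hf0 : ∀ x : X, 0 ≤ f x)
    (hharm : ∀ x : X,
      isoLin μ ν (fun y => ENNReal.ofReal (f y)) x = ENNReal.ofReal (f x)) :
    ∀ x y : X, f x = f y := by
  have : IsUltrametricDist X := ⟨hd⟩
  have : IsLocallyFiniteMeasure μ :=
    ⟨fun x => ⟨closedBall x 1, closedBall_mem_nhds x one_pos, hμfin x 1 one_pos⟩⟩
  have := isFiniteMeasure_restrict_Ici_zero hσmono hσrange hν
  intro x y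
  refine (ENNReal.ofReal_eq_ofReal_iff (hf0 x) (hf0 y)).1 ?_
  exact eq_of_isoLin_eq_self hf.ennreal_ofReal (funext hharm) (fun _ => ENNReal.ofReal_ne_top)
    (fun x r hr => (hμpos x r hr).ne') (fun x r hr => (hμfin x r hr).ne)
    (measure_singleton_zero_eq_zero_s15 hσzero (hσrange 0 le_rfl).1 hν)
    (fun d hd => measure_Ico_zero_lt_one hσmono hσrange hν hd)
    (fun a ha => measure_Ici_ne_zero hσmono hν ha) x y

theorem statement_15
    {X : Type*} [MetricSpace X] [TopologicalSpace.SeparableSpace X]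
    [MeasurableSpace X] [BorelSpace X]
    (hd : ∀ x y z : X, dist x z ≤ max (dist x y) (dist y z))
    (hcb : ∀ (x : X) (r : ℝ), IsCompact (closedBall x r))
    (μ : Measure X)
    (hμpos : ∀ (x : X) (r : ℝ), 0 < r → 0 < μ (closedBall x r))
    (hμfin : ∀ (x : X) (r : ℝ), 0 < r → μ (closedBall x r) < ⊤)
    (σ : ℝ → ℝ)
    (hσmono : StrictMonoOn σ (Set.Ici 0))
    (hσrange : ∀ r : ℝ, 0 ≤ r → σ r ∈ Set.Icc (0:ℝ) 1)
    (hσlc : ∀ r : ℝ, 0 < r → ContinuousWithinAt σ (Set.Iic r) r)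
    (hσzero : Tendsto σ (nhdsWithin 0 (Set.Ioi 0)) (nhds 0))
    (hσtop : Tendsto σ atTop (nhds 1))
    (ν : Measure ℝ)
    (hν : ∀ a b : ℝ, 0 ≤ a → a ≤ b →
      ν (Set.Ico a b) = ENNReal.ofReal (σ b - σ a))
    (hνneg : ν (Set.Iio 0) = 0)
    (f : X → ℝ) (hf : Measurable f) (hf0 : ∀ x : X, 0 ≤ f x)
    (hharm : ∀ x : X,
      isoLin μ ν (fun y => ENNReal.ofReal (f y)) x = ENNReal.ofReal (f x)) :
    ∀ x y : X, f x = f y :=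
  statement_15_general hd μ hμpos hμfin σ hσmono hσrange hσzero ν hν f hf hf0 hharm
end

section
/- Let γ > 0, let R : (0,∞) → [0,∞) be non-decreasing, and set M(t) = ∫_0^∞ R(t/τ) e^{−τ} dτ. Then: (1) if 0 < γ < 1 and R(s) ≤ A·s^γ for all s > 0 then M(t) ≤ A·t^γ/(1−γ) for all t > 0, while if R(s) ≥ B·s^γ for all s > 0 then M(t) ≥ B·t^γ/((1−γ)·e) for all t > 0; (2) if 0 < γ < 1, R(s) = 0 for all 0 < s < t₀ (for some t₀ > 0), and R(s) ≤ A·s^γ for s > t₀, then M(t) ≤ (c/(1−γ))·min{t/t₀, (t/t₀)^γ} for all t > 0 and some constant c > 0; similarly if R(s) ≥ B·s^γ for s > t₀ then M(t) ≥ (c'/(1−γ))·min{t/t₀, (t/t₀)^γ} for some c' > 0; (3) if γ ≥ 1 and R(s) ≥ B·s^γ for all s ≥ t₀ (with B > 0, t₀ ≥ 0), then M(t) = ∞ for all t > 0. -/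
/-!
Inserting `R(s) ≍ s^γ` turns `M(t)` into `t^γ ∫ τ^{-γ} e^{-τ} dτ`. Over `(0, ∞)` this integral is
`Γ(1-γ) ≤ 1/(1-γ)`, by convexity of `Γ` between `Γ 1 = Γ 2 = 1`; over `(0, m)` it is at most
`m^{1-γ}/(1-γ)`, and for `m ≤ 1` it is at least `e⁻¹ m^{1-γ}/(1-γ)`. If `R` vanishes below `t₀`,
only `τ < t/t₀` contributes, and `t^γ min(t/t₀, 1)^{1-γ} = t₀^γ min(t/t₀, (t/t₀)^γ)`. For `γ ≥ 1`,
`τ^{-γ}` is not integrable at `0`, so `M(t) = ∞`.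
-/
open MeasureTheory
open scoped ENNReal

/-- The Laplace-type integral `M(t) = ∫_0^∞ R(t/τ) e^{-τ} dτ`. -/
noncomputable def lapM (R : ℝ → ℝ) (t : ℝ) : ℝ≥0∞ :=
  ∫⁻ τ in Set.Ioi (0:ℝ), ENNReal.ofReal (R (t / τ) * Real.exp (-τ))

open Set Real

theorem Real.Gamma_add_one_le_one {s : ℝ} (hs₀ : 0 ≤ s) (hs₁ : s ≤ 1) : Gamma (s + 1) ≤ 1 := by
  have h := convexOn_Gamma.le_on_segment (x := 1) (y := 2) (z := s + 1) (by norm_num)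
    (by norm_num) (by rw [segment_eq_Icc (by norm_num)]; constructor <;> linarith)
  simpa only [Gamma_one, Gamma_two, max_self] using h

theorem Real.Gamma_le_one_div {s : ℝ} (hs₀ : 0 < s) (hs₁ : s ≤ 1) : Gamma s ≤ 1 / s := by
  rw [le_div_iff₀ hs₀, mul_comm, ← Gamma_add_one hs₀.ne']
  exact Gamma_add_one_le_one hs₀.le hs₁

theorem lintegral_rpow_neg_Ioo {γ m : ℝ} (hγ : γ < 1) (hm : 0 ≤ m) :
    ∫⁻ τ in Ioo 0 m, ENNReal.ofReal (τ ^ (-γ)) = ENNReal.ofReal (m ^ (1 - γ) / (1 - γ)) := by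
  have hint : IntegrableOn (fun τ : ℝ => τ ^ (-γ)) (Ioo 0 m) :=
    (intervalIntegrable_iff_integrableOn_Ioo_of_le hm).1
      (intervalIntegral.intervalIntegrable_rpow' (by linarith))
  rw [← ofReal_integral_eq_lintegral_ofReal hint
    ((ae_restrict_mem measurableSet_Ioo).mono fun τ hτ => rpow_nonneg hτ.1.le _),
    ← integral_Ioc_eq_integral_Ioo, ← intervalIntegral.integral_of_le hm,
    integral_rpow (Or.inl (by linarith)), zero_rpow (by linarith), sub_zero, neg_add_eq_sub]

theorem lintegral_rpow_neg_Ioo_eq_top {γ m : ℝ} (hγ : 1 ≤ γ) (hm : 0 < m) :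
    ∫⁻ τ in Ioo 0 m, ENNReal.ofReal (τ ^ (-γ)) = ⊤ := by
  by_contra h
  have hint : IntegrableOn (fun τ : ℝ => τ ^ (-γ)) (Ioo 0 m) :=
    (lintegral_ofReal_ne_top_iff_integrable (by fun_prop)
      ((ae_restrict_mem measurableSet_Ioo).mono fun τ hτ => rpow_nonneg hτ.1.le _)).1 h
  linarith [(intervalIntegral.integrableOn_Ioo_rpow_iff hm).1 hint]

theorem lintegral_rpow_neg_mul_exp_neg_le {γ : ℝ} (hγ₀ : 0 ≤ γ) (hγ₁ : γ < 1) :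
    ∫⁻ τ in Ioi 0, ENNReal.ofReal (τ ^ (-γ) * exp (-τ)) ≤ ENNReal.ofReal (1 / (1 - γ)) := by
  have hint : IntegrableOn (fun τ : ℝ => τ ^ (-γ) * exp (-τ)) (Ioi 0) := by
    have := GammaIntegral_convergent (s := 1 - γ) (by linarith)
    simp only [sub_sub_cancel_left] at this
    exact this.congr_fun (fun τ _ => mul_comm _ _) measurableSet_Ioi
  rw [← ofReal_integral_eq_lintegral_ofReal hint
    ((ae_restrict_mem measurableSet_Ioi).mono fun τ hτ =>
      mul_nonneg (rpow_nonneg (le_of_lt hτ) _) (exp_nonneg _))]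
  refine ENNReal.ofReal_le_ofReal ?_
  calc ∫ τ in Ioi 0, τ ^ (-γ) * exp (-τ) = Gamma (1 - γ) := by
        rw [Gamma_eq_integral (by linarith), sub_sub_cancel_left]
        exact setIntegral_congr_fun measurableSet_Ioi fun τ _ => mul_comm _ _
    _ ≤ 1 / (1 - γ) := Gamma_le_one_div (by linarith) (by linarith)

theorem lintegral_rpow_neg_mul_exp_neg_Ioo_le {γ m : ℝ} (hγ₀ : 0 ≤ γ) (hγ₁ : γ < 1)
    (hm : 0 ≤ m) :
    ∫⁻ τ in Ioo 0 m, ENNReal.ofReal (τ ^ (-γ) * exp (-τ)) ≤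
      ENNReal.ofReal (min m 1 ^ (1 - γ) / (1 - γ)) := by
  rcases le_total m 1 with hm₁ | hm₁
  · rw [min_eq_left hm₁, ← lintegral_rpow_neg_Ioo hγ₁ hm]
    refine setLIntegral_mono' measurableSet_Ioo fun τ hτ => ENNReal.ofReal_le_ofReal ?_
    exact mul_le_of_le_one_right (rpow_nonneg hτ.1.le _) (exp_le_one_iff.2 (by linarith [hτ.1]))
  · rw [min_eq_right hm₁, one_rpow]
    exact (lintegral_mono_set Ioo_subset_Ioi_self).trans
      (lintegral_rpow_neg_mul_exp_neg_le hγ₀ hγ₁)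

theorem setLIntegral_le_of_le_rpow {R : ℝ → ℝ} {S : Set ℝ} {γ A t : ℝ} (hS : S ⊆ Ioi 0)
    (hSm : MeasurableSet S) (hA : 0 ≤ A) (ht : 0 < t)
    (hR : ∀ τ ∈ S, R (t / τ) ≤ A * (t / τ) ^ γ) :
    ∫⁻ τ in S, ENNReal.ofReal (R (t / τ) * exp (-τ)) ≤
      ENNReal.ofReal (A * t ^ γ) * ∫⁻ τ in S, ENNReal.ofReal (τ ^ (-γ) * exp (-τ)) := by
  rw [← lintegral_const_mul' _ _ ENNReal.ofReal_ne_top]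
  refine setLIntegral_mono' hSm fun τ hτ => ?_
  have hτ₀ : 0 < τ := hS hτ
  rw [← ENNReal.ofReal_mul (by positivity)]
  refine ENNReal.ofReal_le_ofReal ?_
  calc R (t / τ) * exp (-τ) ≤ A * (t / τ) ^ γ * exp (-τ) :=
        mul_le_mul_of_nonneg_right (hR τ hτ) (exp_nonneg _)
    _ = A * t ^ γ * (τ ^ (-γ) * exp (-τ)) := by
        rw [div_rpow ht.le hτ₀.le, rpow_neg hτ₀.le]; ring

theorem le_lapM_of_rpow_le_on_Ioo {R : ℝ → ℝ} {γ B t m : ℝ} (hB : 0 ≤ B) (ht : 0 < t)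
    (hm : m ≤ 1) (hR : ∀ τ ∈ Ioo 0 m, B * (t / τ) ^ γ ≤ R (t / τ)) :
    ENNReal.ofReal (B * t ^ γ / exp 1) * ∫⁻ τ in Ioo 0 m, ENNReal.ofReal (τ ^ (-γ)) ≤
      lapM R t := by
  rw [← lintegral_const_mul' _ _ ENNReal.ofReal_ne_top]
  refine le_trans ?_ (lintegral_mono_set (Ioo_subset_Ioi_self : Ioo (0 : ℝ) m ⊆ Ioi 0))
  refine setLIntegral_mono' measurableSet_Ioo fun τ hτ => ?_
  have hτ₀ : 0 < τ := hτ.1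
  rw [← ENNReal.ofReal_mul (by positivity)]
  refine ENNReal.ofReal_le_ofReal ?_
  calc B * t ^ γ / exp 1 * τ ^ (-γ) = B * (t / τ) ^ γ * exp (-1) := by
        rw [div_rpow ht.le hτ₀.le, rpow_neg hτ₀.le, exp_neg]; ring
    _ ≤ B * (t / τ) ^ γ * exp (-τ) := by gcongr; linarith [hτ.2]
    _ ≤ R (t / τ) * exp (-τ) := mul_le_mul_of_nonneg_right (hR τ hτ) (exp_nonneg _)

theorem lapM_eq_setLIntegral_Ioo {R : ℝ → ℝ} {t₀ t : ℝ} (ht₀ : 0 < t₀) (ht : 0 < t)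
    (hR : ∀ s, 0 < s → s < t₀ → R s = 0) :
    lapM R t = ∫⁻ τ in Ioo 0 (t / t₀), ENNReal.ofReal (R (t / τ) * exp (-τ)) := by
  have hvanish : ∫⁻ τ in Ioi (t / t₀), ENNReal.ofReal (R (t / τ) * exp (-τ)) = 0 := by
    refine (setLIntegral_congr_fun measurableSet_Ioi fun τ hτ => ?_).trans lintegral_zero
    have hτ₀ : 0 < τ := (div_pos ht ht₀).trans hτ
    rw [hR _ (div_pos ht hτ₀) ((div_lt_comm₀ ht₀ hτ₀).1 hτ), zero_mul, ENNReal.ofReal_zero]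
  rw [lapM, ← Ioc_union_Ioi_eq_Ioi (div_pos ht ht₀).le,
    lintegral_union measurableSet_Ioi Ioc_disjoint_Ioi_same, hvanish, add_zero,
    setLIntegral_congr Ioo_ae_eq_Ioc]

theorem rpow_mul_min_div_one_rpow_one_sub_eq {γ t₀ t : ℝ} (hγ : γ ≤ 1) (ht₀ : 0 < t₀)
    (ht : 0 < t) :
    t ^ γ * min (t / t₀) 1 ^ (1 - γ) = t₀ ^ γ * min (t / t₀) ((t / t₀) ^ γ) := by
  have hx : 0 < t / t₀ := div_pos ht ht₀
  have ht_eq : t ^ γ = t₀ ^ γ * (t / t₀) ^ γ := by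
    rw [← mul_rpow ht₀.le hx.le, mul_div_cancel₀ _ ht₀.ne']
  rw [ht_eq, mul_assoc]
  congr 1
  rcases le_total (t / t₀) 1 with hx₁ | hx₁
  · rw [min_eq_left hx₁, ← rpow_add hx, add_sub_cancel, rpow_one,
      min_eq_left (self_le_rpow_of_le_one hx.le hx₁ hγ)]
  · rw [min_eq_right hx₁, one_rpow, mul_one, min_eq_right (rpow_le_self_of_one_le hx₁ hγ)]

theorem lapM_le_of_le_rpow {R : ℝ → ℝ} {γ A t : ℝ} (hγ₀ : 0 ≤ γ) (hγ₁ : γ < 1) (hA : 0 ≤ A)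
    (hR : ∀ s, 0 < s → R s ≤ A * s ^ γ) (ht : 0 < t) :
    lapM R t ≤ ENNReal.ofReal (A * t ^ γ / (1 - γ)) :=
  calc lapM R t
      ≤ ENNReal.ofReal (A * t ^ γ) * ∫⁻ τ in Ioi 0, ENNReal.ofReal (τ ^ (-γ) * exp (-τ)) :=
        setLIntegral_le_of_le_rpow subset_rfl measurableSet_Ioi hA ht
          fun τ hτ => hR _ (div_pos ht hτ)
    _ ≤ ENNReal.ofReal (A * t ^ γ) * ENNReal.ofReal (1 / (1 - γ)) := by
        gcongr; exact lintegral_rpow_neg_mul_exp_neg_le hγ₀ hγ₁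
    _ = ENNReal.ofReal (A * t ^ γ / (1 - γ)) := by
        rw [← ENNReal.ofReal_mul (by positivity), mul_one_div]

theorem le_lapM_of_rpow_le {R : ℝ → ℝ} {γ B t : ℝ} (hγ : γ < 1) (hB : 0 ≤ B)
    (hR : ∀ s, 0 < s → B * s ^ γ ≤ R s) (ht : 0 < t) :
    ENNReal.ofReal (B * t ^ γ / ((1 - γ) * exp 1)) ≤ lapM R t :=
  calc ENNReal.ofReal (B * t ^ γ / ((1 - γ) * exp 1))
      = ENNReal.ofReal (B * t ^ γ / exp 1) * ∫⁻ τ in Ioo 0 1, ENNReal.ofReal (τ ^ (-γ)) := by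
        rw [lintegral_rpow_neg_Ioo hγ zero_le_one, one_rpow,
          ← ENNReal.ofReal_mul (by positivity), div_mul_div_comm, mul_one, mul_comm (1 - γ)]
    _ ≤ lapM R t := le_lapM_of_rpow_le_on_Ioo hB ht le_rfl fun τ hτ => hR _ (div_pos ht hτ.1)

theorem lapM_le_of_eq_zero_of_le_rpow {R : ℝ → ℝ} {γ A t₀ t : ℝ} (hγ₀ : 0 ≤ γ) (hγ₁ : γ < 1)
    (ht₀ : 0 < t₀) (hzero : ∀ s, 0 < s → s < t₀ → R s = 0) (hA : 0 ≤ A)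
    (hR : ∀ s, t₀ < s → R s ≤ A * s ^ γ) (ht : 0 < t) :
    lapM R t ≤ ENNReal.ofReal (A * t₀ ^ γ / (1 - γ) * min (t / t₀) ((t / t₀) ^ γ)) := by
  rw [lapM_eq_setLIntegral_Ioo ht₀ ht hzero]
  calc _ ≤ ENNReal.ofReal (A * t ^ γ) *
        ∫⁻ τ in Ioo 0 (t / t₀), ENNReal.ofReal (τ ^ (-γ) * exp (-τ)) :=
        setLIntegral_le_of_le_rpow Ioo_subset_Ioi_self measurableSet_Ioo hA ht
          fun τ hτ => hR _ ((lt_div_comm₀ hτ.1 ht₀).1 hτ.2)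
    _ ≤ ENNReal.ofReal (A * t ^ γ) * ENNReal.ofReal (min (t / t₀) 1 ^ (1 - γ) / (1 - γ)) := by
        gcongr; exact lintegral_rpow_neg_mul_exp_neg_Ioo_le hγ₀ hγ₁ (by positivity)
    _ = _ := by
        rw [← ENNReal.ofReal_mul (by positivity)]
        congr 1
        linear_combination (A / (1 - γ)) * rpow_mul_min_div_one_rpow_one_sub_eq hγ₁.le ht₀ ht

theorem le_lapM_of_rpow_le_of_lt {R : ℝ → ℝ} {γ B t₀ t : ℝ} (hγ : γ < 1) (ht₀ : 0 < t₀)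
    (hB : 0 ≤ B) (hR : ∀ s, t₀ < s → B * s ^ γ ≤ R s) (ht : 0 < t) :
    ENNReal.ofReal (B * t₀ ^ γ / exp 1 / (1 - γ) * min (t / t₀) ((t / t₀) ^ γ)) ≤ lapM R t :=
  calc _ = ENNReal.ofReal (B * t ^ γ / exp 1) *
        ∫⁻ τ in Ioo 0 (min (t / t₀) 1), ENNReal.ofReal (τ ^ (-γ)) := by
        rw [lintegral_rpow_neg_Ioo hγ (by positivity), ← ENNReal.ofReal_mul (by positivity)]
        congr 1
        linear_combination (-B / exp 1 / (1 - γ)) *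
          rpow_mul_min_div_one_rpow_one_sub_eq hγ.le ht₀ ht
    _ ≤ lapM R t := le_lapM_of_rpow_le_on_Ioo hB ht (min_le_right _ _)
        fun τ hτ => hR _ ((lt_div_comm₀ hτ.1 ht₀).1 (hτ.2.trans_le (min_le_left _ _)))

theorem lapM_eq_top_of_rpow_le {R : ℝ → ℝ} {γ B t₀ t : ℝ} (hγ : 1 ≤ γ) (hB : 0 < B)
    (ht₀ : 0 ≤ t₀) (hR : ∀ s, t₀ ≤ s → 0 < s → B * s ^ γ ≤ R s) (ht : 0 < t) :
    lapM R t = ⊤ := by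
  -- `t₀` may vanish, so the cut-off uses `t₀ + 1`.
  set m := min (t / (t₀ + 1)) 1
  have hm : 0 < m := by positivity
  have hR' : ∀ τ ∈ Ioo 0 m, B * (t / τ) ^ γ ≤ R (t / τ) := fun τ hτ => by
    have := (lt_div_comm₀ hτ.1 (by linarith)).1 (hτ.2.trans_le (min_le_left _ _))
    exact hR _ (by linarith) (div_pos ht hτ.1)
  refine eq_top_iff.2 ?_
  calc ⊤ = ENNReal.ofReal (B * t ^ γ / exp 1) * ∫⁻ τ in Ioo 0 m, ENNReal.ofReal (τ ^ (-γ)) := by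
        rw [lintegral_rpow_neg_Ioo_eq_top hγ hm,
          ENNReal.mul_top (ENNReal.ofReal_pos.2 (by positivity)).ne']
    _ ≤ lapM R t := le_lapM_of_rpow_le_on_Ioo hB.le ht (min_le_right _ _) hR'

theorem statement_17_general (R : ℝ → ℝ)
    (γ : ℝ) (hγ : 0 < γ) :
    ((γ < 1 → ∀ A : ℝ, 0 < A → (∀ s : ℝ, 0 < s → R s ≤ A * s ^ γ) →
        ∀ t : ℝ, 0 < t → lapM R t ≤ ENNReal.ofReal (A * t ^ γ / (1 - γ))) ∧
     (γ < 1 → ∀ B : ℝ, 0 < B → (∀ s : ℝ, 0 < s → B * s ^ γ ≤ R s) →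
        ∀ t : ℝ, 0 < t →
          ENNReal.ofReal (B * t ^ γ / ((1 - γ) * Real.exp 1)) ≤ lapM R t)) ∧
    ((γ < 1 → ∀ t₀ : ℝ, 0 < t₀ → (∀ s : ℝ, 0 < s → s < t₀ → R s = 0) →
        ∀ A : ℝ, 0 < A → (∀ s : ℝ, t₀ < s → R s ≤ A * s ^ γ) →
          ∃ c : ℝ, 0 < c ∧ ∀ t : ℝ, 0 < t →
            lapM R t ≤ ENNReal.ofReal (c / (1 - γ) * min (t / t₀) ((t / t₀) ^ γ))) ∧
     (γ < 1 → ∀ t₀ : ℝ, 0 < t₀ → (∀ s : ℝ, 0 < s → s < t₀ → R s = 0) →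
        ∀ B : ℝ, 0 < B → (∀ s : ℝ, t₀ < s → B * s ^ γ ≤ R s) →
          ∃ c' : ℝ, 0 < c' ∧ ∀ t : ℝ, 0 < t →
            ENNReal.ofReal (c' / (1 - γ) * min (t / t₀) ((t / t₀) ^ γ)) ≤ lapM R t)) ∧
    (1 ≤ γ → ∀ B t₀ : ℝ, 0 < B → 0 ≤ t₀ →
        (∀ s : ℝ, t₀ ≤ s → 0 < s → B * s ^ γ ≤ R s) →
        ∀ t : ℝ, 0 < t → lapM R t = ⊤) := by
  refine ⟨⟨fun hγ₁ A hA hR t ht => lapM_le_of_le_rpow hγ.le hγ₁ hA.le hR ht,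
    fun hγ₁ B hB hR t ht => le_lapM_of_rpow_le hγ₁ hB.le hR ht⟩,
    ⟨fun hγ₁ t₀ ht₀ hzero A hA hR => ⟨A * t₀ ^ γ, by positivity,
      fun t ht => lapM_le_of_eq_zero_of_le_rpow hγ.le hγ₁ ht₀ hzero hA.le hR ht⟩,
    fun hγ₁ t₀ ht₀ _ B hB hR => ⟨B * t₀ ^ γ / exp 1, by positivity,
      fun t ht => le_lapM_of_rpow_le_of_lt hγ₁ ht₀ hB.le hR ht⟩⟩,
    fun hγ₁ B t₀ hB ht₀ hR t ht => lapM_eq_top_of_rpow_le hγ₁ hB ht₀ hR ht⟩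

theorem statement_17 (R : ℝ → ℝ)
    (hRmono : MonotoneOn R (Set.Ioi 0))
    (hRnonneg : ∀ s : ℝ, 0 < s → 0 ≤ R s)
    (γ : ℝ) (hγ : 0 < γ) :
    ((γ < 1 → ∀ A : ℝ, 0 < A → (∀ s : ℝ, 0 < s → R s ≤ A * s ^ γ) →
        ∀ t : ℝ, 0 < t → lapM R t ≤ ENNReal.ofReal (A * t ^ γ / (1 - γ))) ∧
     (γ < 1 → ∀ B : ℝ, 0 < B → (∀ s : ℝ, 0 < s → B * s ^ γ ≤ R s) →
        ∀ t : ℝ, 0 < t →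
          ENNReal.ofReal (B * t ^ γ / ((1 - γ) * Real.exp 1)) ≤ lapM R t)) ∧
    ((γ < 1 → ∀ t₀ : ℝ, 0 < t₀ → (∀ s : ℝ, 0 < s → s < t₀ → R s = 0) →
        ∀ A : ℝ, 0 < A → (∀ s : ℝ, t₀ < s → R s ≤ A * s ^ γ) →
          ∃ c : ℝ, 0 < c ∧ ∀ t : ℝ, 0 < t →
            lapM R t ≤ ENNReal.ofReal (c / (1 - γ) * min (t / t₀) ((t / t₀) ^ γ))) ∧
     (γ < 1 → ∀ t₀ : ℝ, 0 < t₀ → (∀ s : ℝ, 0 < s → s < t₀ → R s = 0) →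
        ∀ B : ℝ, 0 < B → (∀ s : ℝ, t₀ < s → B * s ^ γ ≤ R s) →
          ∃ c' : ℝ, 0 < c' ∧ ∀ t : ℝ, 0 < t →
            ENNReal.ofReal (c' / (1 - γ) * min (t / t₀) ((t / t₀) ^ γ)) ≤ lapM R t)) ∧
    (1 ≤ γ → ∀ B t₀ : ℝ, 0 < B → 0 ≤ t₀ →
        (∀ s : ℝ, t₀ ≤ s → 0 < s → B * s ^ γ ≤ R s) →
        ∀ t : ℝ, 0 < t → lapM R t = ⊤) :=
  statement_17_general R γ hγ
end

section
/- The Green function g_α(x,y) = ∫_0^∞ p_α(t,x,y) dt is finite for some (equivalently, every) pair of distinct x, y ∈ ℚ_p if and only if α < 1; and for 0 < α < 1 and all x ≠ y it is given explicitly by g_α(x,y) = ((1 − p^{−α})/(1 − p^{α−1})) · ‖x−y‖_p^{α−1}. -/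
/-!
The p-adic norm takes values in `p ^ ℤ`, so `B_r(x) = B_{p^k}(x)` for `p^k ≤ r < p^(k+1)`, and
since `B_{p^(k+1)}(0)` is the disjoint union of `p` translates of `B_{p^k}(0)`, the normalisation
gives `μ (B_{p^k}(x)) = p^k`. Cutting `[‖x - y‖, ∞)` into the shells `[s, s p)` with
`s = ‖x - y‖ p^n`, the heat kernel becomes a series whose `n`-th term is
`s⁻¹ (σ_α(s p)^t - σ_α(s)^t)`, a difference of two exponentials in `t`. Integrating in `t` turns
it into `(1 - p^(-α)) s^(α - 1)`, so the Green function is a geometric series of ratio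
`p^(α - 1)`, finite exactly when `α < 1`.
-/

open MeasureTheory Metric
open scoped ENNReal

/-- The distance distribution function `σ_α(r) = exp(−(p/r)^α)`,
extended by `0` for `r ≤ 0`. -/
noncomputable def padicSigma (p : ℕ) (α : ℝ) (r : ℝ) : ℝ :=
  if r ≤ 0 then 0 else Real.exp (-(((p : ℝ) / r) ^ α))

/-- The heat kernel `p_α(t,x,y) = ∫_[‖x−y‖_p,∞) μ(B_r(x))⁻¹ dσ_α^t(r)` on `ℚ_p`. -/
noncomputable def padicHeatK (p : ℕ) [Fact p.Prime] [MeasurableSpace ℚ_[p]]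
    (μ : Measure ℚ_[p]) (ν : ℝ → Measure ℝ) (t : ℝ) (x y : ℚ_[p]) : ℝ≥0∞ :=
  ∫⁻ r in Set.Ici ‖x - y‖, (μ (closedBall x r))⁻¹ ∂(ν t)

/-- The Green function `g_α(x,y) = ∫_0^∞ p_α(t,x,y) dt` on `ℚ_p`. -/
noncomputable def padicGreen (p : ℕ) [Fact p.Prime] [MeasurableSpace ℚ_[p]]
    (μ : Measure ℚ_[p]) (ν : ℝ → Measure ℝ) (x y : ℚ_[p]) : ℝ≥0∞ :=
  ∫⁻ t in Set.Ioi (0:ℝ), padicHeatK p μ ν t x y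

open Set Filter

theorem lintegral_Ici_eq_tsum_Ico {β : Type*} [LinearOrder β] [TopologicalSpace β]
    [OrderClosedTopology β] [MeasurableSpace β] [OpensMeasurableSpace β]
    {f : ℕ → β} (hf : Monotone f) (h2f : ¬BddAbove (range f)) (ν : Measure β)
    (g : β → ℝ≥0∞) :
    ∫⁻ r in Ici (f 0), g r ∂ν = ∑' n, ∫⁻ r in Ico (f n) (f (n + 1)), g r ∂ν := by
  have hU : ⋃ n, Ico (f n) (f (n + 1)) = Ici (f 0) :=
    iUnion_Ico_map_succ_eq_Ici (fun n => hf bot_le) h2f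
  rw [← hU]
  exact lintegral_iUnion (fun _ => measurableSet_Ico) hf.pairwise_disjoint_on_Ico_succ g

theorem lintegral_ofReal_exp_neg_mul_sub {a b : ℝ} (ha : 0 < a) (hab : a ≤ b) :
    ∫⁻ t in Ioi 0, ENNReal.ofReal (Real.exp (-(a * t)) - Real.exp (-(b * t)))
      = ENNReal.ofReal (a⁻¹ - b⁻¹) := by
  have hint : ∀ c : ℝ, 0 < c → IntegrableOn (fun t => Real.exp (-(c * t))) (Ioi 0) ∧
      ∫ t in Ioi 0, Real.exp (-(c * t)) = c⁻¹ := fun c hc => by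
    simp only [← neg_mul]
    refine ⟨exp_neg_integrableOn_Ioi 0 hc, ?_⟩
    rw [integral_exp_mul_Ioi (by linarith) 0]
    simp
  obtain ⟨ia, hia⟩ := hint a ha
  obtain ⟨ib, hib⟩ := hint b (ha.trans_le hab)
  have hnonneg : 0 ≤ᵐ[volume.restrict (Ioi 0)]
      fun t => Real.exp (-(a * t)) - Real.exp (-(b * t)) := by
    filter_upwards [ae_restrict_mem measurableSet_Ioi] with t (ht : 0 < t)
    simpa using mul_le_mul_of_nonneg_right hab ht.le
  have h := ofReal_integral_eq_lintegral_ofReal (ia.sub ib) hnonneg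
  simp only [Pi.sub_apply, integral_sub ia ib, hia, hib] at h
  exact h.symm

theorem ENNReal.tsum_ofReal_mul_pow {c q : ℝ} (hc : 0 ≤ c) (hq : 0 ≤ q) :
    ∑' n : ℕ, ENNReal.ofReal (c * q ^ n) = ENNReal.ofReal c * (1 - ENNReal.ofReal q)⁻¹ := by
  simp only [ENNReal.ofReal_mul hc, ENNReal.ofReal_pow hq, ENNReal.tsum_mul_left,
    ENNReal.tsum_geometric]

namespace Padic

variable {p : ℕ} [hp : Fact p.Prime]

theorem closedBall_eq_of_mem_Ico (x : ℚ_[p]) {k : ℤ} {r : ℝ}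
    (hr : r ∈ Ico ((p : ℝ) ^ k) (p ^ (k + 1))) :
    closedBall x r = closedBall x ((p : ℝ) ^ k) := by
  refine (closedBall_subset_closedBall hr.1).antisymm' fun z hz => ?_
  rw [mem_closedBall, dist_eq_norm, norm_le_pow_iff_norm_lt_pow_add_one]
  exact (mem_closedBall.1 hz).trans_lt hr.2

theorem closedBall_zpow_succ_eq_biUnion (k : ℤ) :
    closedBall (0 : ℚ_[p]) ((p : ℝ) ^ (k + 1)) =
      ⋃ j ∈ Finset.range p,
        closedBall ((j : ℚ_[p]) * (p : ℚ_[p]) ^ (-(k + 1))) ((p : ℝ) ^ k) := by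
  have hp0 : (p : ℚ_[p]) ≠ 0 := by exact_mod_cast hp.out.ne_zero
  have hpR : (p : ℝ) ≠ 0 := by exact_mod_cast hp.out.ne_zero
  refine subset_antisymm (fun z hz => ?_) (iUnion₂_subset fun j _ => ?_)
  · rw [mem_closedBall_zero_iff] at hz
    set u : ℚ_[p] := z * (p : ℚ_[p]) ^ (k + 1)
    have hu : ‖u‖ ≤ 1 := by
      calc ‖u‖ = ‖z‖ * (p : ℝ) ^ (-(k + 1)) := by rw [norm_mul, norm_p_zpow]
        _ ≤ (p : ℝ) ^ (k + 1) * (p : ℝ) ^ (-(k + 1)) := by gcongr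
        _ = 1 := by rw [← zpow_add₀ hpR, add_neg_cancel, zpow_zero]
    let U : ℤ_[p] := ⟨u, hu⟩
    obtain ⟨j, hj, hju⟩ := PadicInt.exists_mem_range U
    rw [IsLocalRing.mem_maximalIdeal, PadicInt.mem_nonunits, PadicInt.norm_def,
      PadicInt.coe_sub, PadicInt.coe_natCast] at hju
    have hju' : ‖u - j‖ ≤ (p : ℝ) ^ (-1 : ℤ) :=
      (norm_lt_pow_iff_norm_le_pow_sub_one _ 0).1 (by simpa using hju)
    have hz : z - j * (p : ℚ_[p]) ^ (-(k + 1)) = (u - j) * (p : ℚ_[p]) ^ (-(k + 1)) := by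
      rw [sub_mul, mul_assoc, ← zpow_add₀ hp0, add_neg_cancel, zpow_zero, mul_one]
    simp only [mem_iUnion, Finset.mem_range, mem_closedBall, dist_eq_norm]
    refine ⟨j, hj, ?_⟩
    calc ‖z - j * (p : ℚ_[p]) ^ (-(k + 1))‖ = ‖u - j‖ * (p : ℝ) ^ (k + 1) := by
          rw [hz, norm_mul, norm_p_zpow, neg_neg]
      _ ≤ (p : ℝ) ^ (-1 : ℤ) * (p : ℝ) ^ (k + 1) := by gcongr
      _ = (p : ℝ) ^ k := by rw [← zpow_add₀ hpR]; ring_nf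
  · have hc : ‖(j : ℚ_[p]) * (p : ℚ_[p]) ^ (-(k + 1))‖ ≤ (p : ℝ) ^ (k + 1) := by
      rw [norm_mul, norm_p_zpow, neg_neg]
      exact mul_le_of_le_one_left (by positivity) (IsUltrametricDist.norm_natCast_le_one _ j)
    rw [IsUltrametricDist.closedBall_eq_of_mem (mem_closedBall_zero_iff.2 hc)]
    exact closedBall_subset_closedBall
      (zpow_le_zpow_right₀ (by exact_mod_cast hp.out.one_le) (by omega))

theorem pairwiseDisjoint_closedBall_zpow (k : ℤ) :
    (Finset.range p : Set ℕ).PairwiseDisjoint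
      fun j => closedBall ((j : ℚ_[p]) * (p : ℚ_[p]) ^ (-(k + 1))) ((p : ℝ) ^ k) := by
  intro i hi j hj hij
  simp only [Finset.coe_range, mem_Iio] at hi hj
  refine Set.disjoint_left.2 fun z hzi hzj => ?_
  set c : ℚ_[p] := (p : ℚ_[p]) ^ (-(k + 1))
  have hnd : ¬(p : ℤ) ∣ (i - j : ℤ) := fun hdvd => hij <| by
    have := Int.eq_zero_of_abs_lt_dvd hdvd (abs_lt.2 ⟨by omega, by omega⟩)
    omega
  have hunit : ‖((i - j : ℤ) : ℚ_[p])‖ = 1 :=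
    (norm_int_le_one _).antisymm (not_lt.1 (norm_intCast_lt_one_iff.not.2 hnd))
  have hfar : dist ((i : ℚ_[p]) * c) (j * c) = (p : ℝ) ^ (k + 1) := by
    push_cast at hunit
    rw [dist_eq_norm, ← sub_mul, norm_mul, norm_p_zpow, neg_neg, hunit, one_mul]
  have hnear : dist ((i : ℚ_[p]) * c) (j * c) ≤ (p : ℝ) ^ k :=
    (IsUltrametricDist.dist_triangle_max _ z _).trans
      (max_le (dist_comm z _ ▸ mem_closedBall.1 hzi) (mem_closedBall.1 hzj))
  exact (hfar ▸ hnear).not_gt (zpow_lt_zpow_right₀ (by exact_mod_cast hp.out.one_lt) (by omega))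

variable [MeasurableSpace ℚ_[p]] [BorelSpace ℚ_[p]] (μ : Measure ℚ_[p]) [μ.IsAddHaarMeasure]

theorem measure_closedBall_zpow_succ (k : ℤ) :
    μ (closedBall 0 ((p : ℝ) ^ (k + 1))) = p * μ (closedBall 0 ((p : ℝ) ^ k)) := by
  rw [closedBall_zpow_succ_eq_biUnion, measure_biUnion_finset (pairwiseDisjoint_closedBall_zpow k)
    fun _ _ => measurableSet_closedBall]
  simp only [Measure.addHaar_closedBall_center μ _ ((p : ℝ) ^ k), Finset.sum_const,
    Finset.card_range, nsmul_eq_mul]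

theorem measure_closedBall_zpow (hμ1 : μ (closedBall 0 1) = 1) (x : ℚ_[p]) (k : ℤ) :
    μ (closedBall x ((p : ℝ) ^ k)) = ENNReal.ofReal ((p : ℝ) ^ k) := by
  have hp0 : (p : ℝ≥0∞) ≠ 0 := by exact_mod_cast hp.out.ne_zero
  have hstep (k : ℤ) :
      ENNReal.ofReal ((p : ℝ) ^ (k + 1)) = p * ENNReal.ofReal ((p : ℝ) ^ k) := by
    rw [zpow_add_one₀ (by exact_mod_cast hp.out.ne_zero), mul_comm,
      ENNReal.ofReal_mul (by positivity), ENNReal.ofReal_natCast]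
  rw [Measure.addHaar_closedBall_center]
  induction k using Int.induction_on with
  | zero => simpa using hμ1
  | succ n ih => rw [measure_closedBall_zpow_succ, ih, hstep]
  | pred n ih =>
    rw [← ENNReal.mul_right_inj hp0 (ENNReal.natCast_ne_top p), ← measure_closedBall_zpow_succ,
      ← hstep, sub_add_cancel, ih]

end Padic

theorem padicSigma_rpow (p : ℕ) (α t : ℝ) {r : ℝ} (hr : 0 < r) :
    padicSigma p α r ^ t = Real.exp (-(((p : ℝ) / r) ^ α * t)) := by
  rw [padicSigma, if_neg hr.not_ge, ← Real.exp_mul, neg_mul]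

theorem lintegral_padicSigma_rpow_sub {p : ℕ} (hp : 0 < p) {α : ℝ} (hα : 0 < α) {s : ℝ}
    (hs : 0 < s) :
    ∫⁻ t in Ioi (0 : ℝ),
        ENNReal.ofReal (padicSigma p α (s * p) ^ t - padicSigma p α s ^ t) =
      ENNReal.ofReal ((1 - (p : ℝ) ^ (-α)) * s ^ α) := by
  have hp0 : (0 : ℝ) < p := by exact_mod_cast hp
  have hab : ((p : ℝ) / (s * p)) ^ α ≤ ((p : ℝ) / s) ^ α := by
    gcongr
    exact le_mul_of_one_le_right hs.le (by exact_mod_cast hp)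
  simp only [padicSigma_rpow p α _ (mul_pos hs hp0), padicSigma_rpow p α _ hs,
    lintegral_ofReal_exp_neg_mul_sub (by positivity) hab]
  rw [div_mul_cancel_right₀ hp0.ne', Real.inv_rpow hs.le, Real.div_rpow hp0.le hs.le,
    Real.rpow_neg hp0.le]
  have := Real.rpow_pos_of_pos hp0 α
  field_simp

section Green

variable {p : ℕ} [hp : Fact p.Prime] [MeasurableSpace ℚ_[p]] [BorelSpace ℚ_[p]]
  (μ : Measure ℚ_[p]) [μ.IsAddHaarMeasure] (ν : ℝ → Measure ℝ)
  (hμ1 : μ (closedBall 0 1) = 1)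
include hμ1

theorem padicHeatK_eq_tsum (t : ℝ) {x y : ℚ_[p]} (hxy : x ≠ y) :
    padicHeatK p μ ν t x y = ∑' n : ℕ, (ENNReal.ofReal (‖x - y‖ * p ^ n))⁻¹ *
      ν t (Ico (‖x - y‖ * p ^ n) (‖x - y‖ * p ^ n * p)) := by
  have hp1 : (1 : ℝ) < p := by exact_mod_cast hp.out.one_lt
  set K := -(x - y).valuation
  have hK : ‖x - y‖ = (p : ℝ) ^ K := Padic.norm_eq_zpow_neg_valuation (sub_ne_zero.2 hxy)
  have hmono : Monotone fun n : ℕ => ‖x - y‖ * (p : ℝ) ^ n := fun m n hmn =>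
    mul_le_mul_of_nonneg_left (pow_le_pow_right₀ hp1.le hmn) (norm_nonneg _)
  have hunbdd : ¬BddAbove (range fun n : ℕ => ‖x - y‖ * (p : ℝ) ^ n) :=
    not_bddAbove_of_tendsto_atTop ((tendsto_pow_atTop_atTop_of_one_lt hp1).const_mul_atTop
      (hK ▸ zpow_pos (by positivity) K))
  have hshells := lintegral_Ici_eq_tsum_Ico hmono hunbdd (ν t) fun r => (μ (closedBall x r))⁻¹
  simp only [pow_zero, mul_one, pow_succ, ← mul_assoc] at hshells
  rw [padicHeatK, hshells]
  congr with n
  have hball : ∀ r ∈ Ico (‖x - y‖ * p ^ n) (‖x - y‖ * p ^ n * p),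
      (μ (closedBall x r))⁻¹ = (ENNReal.ofReal (‖x - y‖ * p ^ n))⁻¹ := by
    intro r hr
    rw [hK, ← zpow_natCast, ← zpow_add₀ (by positivity)] at hr ⊢
    rw [← zpow_add_one₀ (by positivity)] at hr
    rw [Padic.closedBall_eq_of_mem_Ico x hr, Padic.measure_closedBall_zpow μ hμ1]
  rw [setLIntegral_congr_fun measurableSet_Ico hball, setLIntegral_const, mul_comm]

variable {α : ℝ} (hα : 0 < α)
  (hν : ∀ t : ℝ, 0 < t → ∀ a b : ℝ, a ≤ b →
    ν t (Ico a b) = ENNReal.ofReal (padicSigma p α b ^ t - padicSigma p α a ^ t))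
include hα hν

/-- For `α ≥ 1` the truncated subtraction makes the last factor `0⁻¹ = ⊤`. -/
theorem padicGreen_eq {x y : ℚ_[p]} (hxy : x ≠ y) :
    padicGreen p μ ν x y = ENNReal.ofReal ((1 - (p : ℝ) ^ (-α)) * ‖x - y‖ ^ (α - 1)) *
      (1 - ENNReal.ofReal ((p : ℝ) ^ (α - 1)))⁻¹ := by
  have hp0 : (0 : ℝ) < p := by exact_mod_cast hp.out.pos
  have hd : 0 < ‖x - y‖ := norm_pos_iff.2 (sub_ne_zero.2 hxy)
  set r : ℕ → ℝ := fun n => ‖x - y‖ * p ^ n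
  have hr (n : ℕ) : 0 < r n := by positivity
  have hheat : ∀ t ∈ Ioi (0 : ℝ), padicHeatK p μ ν t x y =
      ∑' n : ℕ, (ENNReal.ofReal (r n))⁻¹ *
        ENNReal.ofReal (padicSigma p α (r n * p) ^ t - padicSigma p α (r n) ^ t) := by
    intro t (ht : 0 < t)
    rw [padicHeatK_eq_tsum μ ν hμ1 t hxy]
    congr with n
    rw [hν t ht _ _ (le_mul_of_one_le_right (hr n).le (by exact_mod_cast hp.out.one_le))]
  have hshell (n : ℕ) :
      (ENNReal.ofReal (r n))⁻¹ * ENNReal.ofReal ((1 - (p : ℝ) ^ (-α)) * r n ^ α) =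
        ENNReal.ofReal
          ((1 - (p : ℝ) ^ (-α)) * ‖x - y‖ ^ (α - 1) * ((p : ℝ) ^ (α - 1)) ^ n) := by
    rw [← ENNReal.ofReal_inv_of_pos (hr n), ← ENNReal.ofReal_mul (inv_nonneg.2 (hr n).le),
      mul_assoc, Real.rpow_pow_comm hp0.le, ← Real.mul_rpow hd.le (by positivity),
      Real.rpow_sub_one (hr n).ne']
    ring_nf
  rw [padicGreen, setLIntegral_congr_fun measurableSet_Ioi hheat,
    lintegral_tsum fun n => (Measurable.const_mul (by fun_prop) _).aemeasurable]
  simp only [lintegral_const_mul' _ _ (ENNReal.inv_ne_top.2 (ENNReal.ofReal_pos.2 (hr _)).ne'),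
    lintegral_padicSigma_rpow_sub hp.out.pos hα (hr _), hshell]
  exact ENNReal.tsum_ofReal_mul_pow (mul_nonneg (sub_nonneg.2
    (Real.rpow_le_one_of_one_le_of_nonpos (by exact_mod_cast hp.out.one_le) (by linarith)))
      (by positivity)) (by positivity)

theorem padicGreen_eq_ofReal (hα1 : α < 1) {x y : ℚ_[p]} (hxy : x ≠ y) :
    padicGreen p μ ν x y = ENNReal.ofReal ((1 - (p : ℝ) ^ (-α)) / (1 - (p : ℝ) ^ (α - 1)) *
      ‖x - y‖ ^ (α - 1)) := by
  have hp1 : (1 : ℝ) < p := by exact_mod_cast hp.out.one_lt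
  have hq : (p : ℝ) ^ (α - 1) < 1 := Real.rpow_lt_one_of_one_lt_of_neg hp1 (by linarith)
  rw [padicGreen_eq μ ν hμ1 hα hν hxy, ← ENNReal.ofReal_one,
    ← ENNReal.ofReal_sub _ (by positivity), ← ENNReal.ofReal_inv_of_pos (by linarith),
    ← ENNReal.ofReal_mul (mul_nonneg (sub_nonneg.2
      (Real.rpow_le_one_of_one_le_of_nonpos hp1.le (by linarith))) (by positivity))]
  congr 1
  ring

theorem padicGreen_eq_top (hα1 : 1 ≤ α) {x y : ℚ_[p]} (hxy : x ≠ y) :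
    padicGreen p μ ν x y = ⊤ := by
  have hp1 : (1 : ℝ) < p := by exact_mod_cast hp.out.one_lt
  have hc : 0 < (1 - (p : ℝ) ^ (-α)) * ‖x - y‖ ^ (α - 1) :=
    mul_pos (sub_pos.2 (Real.rpow_lt_one_of_one_lt_of_neg hp1 (by linarith)))
      (Real.rpow_pos_of_pos (norm_pos_iff.2 (sub_ne_zero.2 hxy)) _)
  rw [padicGreen_eq μ ν hμ1 hα hν hxy,
    tsub_eq_zero_of_le (ENNReal.one_le_ofReal.2 (Real.one_le_rpow hp1.le (by linarith))),
    ENNReal.inv_zero, ENNReal.mul_top (ENNReal.ofReal_pos.2 hc).ne']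

theorem padicGreen_lt_top_iff {x y : ℚ_[p]} (hxy : x ≠ y) :
    padicGreen p μ ν x y < ⊤ ↔ α < 1 := by
  refine ⟨fun h => not_le.1 fun hα1 => ?_, fun hα1 => ?_⟩
  · exact h.ne (padicGreen_eq_top μ ν hμ1 hα hν hα1 hxy)
  · exact padicGreen_eq_ofReal μ ν hμ1 hα hν hα1 hxy ▸ ENNReal.ofReal_lt_top

end Green

theorem statement_19 (p : ℕ) [Fact p.Prime]
    [MeasurableSpace ℚ_[p]] [BorelSpace ℚ_[p]]
    (μ : Measure ℚ_[p]) [μ.IsAddHaarMeasure]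
    (hμ1 : μ (closedBall 0 1) = 1)
    (α : ℝ) (hα : 0 < α)
    (ν : ℝ → Measure ℝ)
    (hν : ∀ t : ℝ, 0 < t → ∀ a b : ℝ, a ≤ b →
      ν t (Set.Ico a b) =
        ENNReal.ofReal (padicSigma p α b ^ t - padicSigma p α a ^ t)) :
    ((∃ x y : ℚ_[p], x ≠ y ∧ padicGreen p μ ν x y < ⊤) ↔ α < 1) ∧
    ((∀ x y : ℚ_[p], x ≠ y → padicGreen p μ ν x y < ⊤) ↔ α < 1) ∧
    (α < 1 → ∀ x y : ℚ_[p], x ≠ y →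
      padicGreen p μ ν x y =
        ENNReal.ofReal ((1 - (p : ℝ) ^ (-α)) / (1 - (p : ℝ) ^ (α - 1)) *
          ‖x - y‖ ^ (α - 1))) := by
  have hfin {x y : ℚ_[p]} (hxy : x ≠ y) := padicGreen_lt_top_iff μ ν hμ1 hα hν hxy
  refine ⟨⟨fun ⟨x, y, hxy, h⟩ => (hfin hxy).1 h,
      fun h => ⟨0, 1, zero_ne_one, (hfin zero_ne_one).2 h⟩⟩,
    ⟨fun h => (hfin zero_ne_one).1 (h 0 1 zero_ne_one), fun h x y hxy => (hfin hxy).2 h⟩,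
    fun h x y hxy => padicGreen_eq_ofReal μ ν hμ1 hα hν h hxy⟩
end
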